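/- arXiv:1505.05381 — 11 statements merged into one kernel-verified Lean document; each statement's English description precedes it below -/
import Mathlib

section
/- Every quadratic polynomial q on ℝ² with nonzero coefficient vector that vanishes at the five points A, B, C, P, Q also vanishes at P' and at Q'. (Equivalently: the conic 𝒞_P through A, B, C, P, Q also passes through the isotomic conjugate P' of P and through Q' = K(P).) -/
noncomputable section

abbrev Pt := EuclideanSpace ℝ (Fin 2)

/-- The quadratic polynomial `a*x^2 + b*x*y + c*y^2 + d*x + e*y + f` evaluated at a point. -/
def qeval (a b c d e f : ℝ) (W : Pt) : ℝ :=
  a * (W 0)^2 + b * (W 0) * (W 1) + c * (W 1)^2 + d * (W 0) + e * (W 1) + f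

/-!
Write `X = x • A + y • B + z • C` with `x + y + z = 1`. Since `q` vanishes at the vertices, the
polarization of its homogenization gives `q X = u y z + v z x + w x y`, the equation of a
circumconic in barycentric coordinates. Isotomic conjugation `(x, y, z) ↦ (y z, z x, x y)`
carries this conic to the line `L X = u x + v y + w z`, and the complement
`K X = ((1 - x)/2, (1 - y)/2, (1 - z)/2)` satisfies `q (K X) = (q X + L X) / 4`. With `s⁻¹` the
normalising factor of `P'` this gives
`q P' = s⁻¹² α β γ L P`, `q Q = (s⁻¹² α β γ L P + s⁻¹ q P) / 4` and `q Q' = (q P + L P) / 4`,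
so `q P = q Q = 0` forces `L P = 0` and then `q P' = q Q' = 0`.
-/

/-- Polar form of the homogenized quadratic, normalised so that `qpolar V V = 2 * qeval V`. -/
def qpolar (a b c d e f : ℝ) (V W : Pt) : ℝ :=
  2 * a * V 0 * W 0 + b * (V 0 * W 1 + V 1 * W 0) + 2 * c * V 1 * W 1
    + d * (V 0 + W 0) + e * (V 1 + W 1) + 2 * f

theorem qeval_smul_add_smul_add_smul (a b c d e f x y z : ℝ) (A B C : Pt)
    (hxyz : x + y + z = 1) :
    qeval a b c d e f (x • A + y • B + z • C) =
      x ^ 2 * qeval a b c d e f A + y ^ 2 * qeval a b c d e f B + z ^ 2 * qeval a b c d e f C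
        + y * z * qpolar a b c d e f B C + z * x * qpolar a b c d e f C A
        + x * y * qpolar a b c d e f A B := by
  obtain rfl : z = 1 - x - y := by linarith
  simp only [qeval, qpolar, PiLp.add_apply, PiLp.smul_apply, smul_eq_mul]
  ring

def circumconic (u v w x y z : ℝ) : ℝ := u * y * z + v * z * x + w * x * y

theorem circumconic_complement (u v w x y z : ℝ) (hxyz : x + y + z = 1) :
    circumconic u v w ((1 - x) / 2) ((1 - y) / 2) ((1 - z) / 2) =
      (circumconic u v w x y z + (u * x + v * y + w * z)) / 4 := by
  obtain rfl : z = 1 - x - y := by linarith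
  unfold circumconic
  ring

theorem circumconic_isotomic (u v w x y z k : ℝ) :
    circumconic u v w (k * (y * z)) (k * (z * x)) (k * (x * y)) =
      k ^ 2 * x * y * z * (u * x + v * y + w * z) := by
  unfold circumconic
  ring

theorem qeval_eq_circumconic {a b c d e f : ℝ} {A B C : Pt} (hA : qeval a b c d e f A = 0)
    (hB : qeval a b c d e f B = 0) (hC : qeval a b c d e f C = 0) {x y z : ℝ}
    (hxyz : x + y + z = 1) :
    qeval a b c d e f (x • A + y • B + z • C) =
      circumconic (qpolar a b c d e f B C) (qpolar a b c d e f C A) (qpolar a b c d e f A B)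
        x y z := by
  rw [qeval_smul_add_smul_add_smul a b c d e f x y z A B C hxyz, hA, hB, hC, circumconic]
  ring

theorem centroid_sub_half_smul_sub_centroid {V : Type*} [AddCommGroup V] [Module ℝ V]
    (A B C : V) (x y z : ℝ) :
    (3 : ℝ)⁻¹ • (A + B + C) - (2 : ℝ)⁻¹ • (x • A + y • B + z • C - (3 : ℝ)⁻¹ • (A + B + C)) =
      ((1 - x) / 2) • A + ((1 - y) / 2) • B + ((1 - z) / 2) • C := by
  module

theorem stmt0_general
    (A B C : Pt)
    (α β γ : ℝ) (hsum : α + β + γ = 1)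
    (hα : α ≠ 0) (hβ : β ≠ 0) (hγ : γ ≠ 0)
    (hs : α * β + β * γ + γ * α ≠ 0)
    (G : Pt) (hG : G = (3:ℝ)⁻¹ • (A + B + C))
    (P : Pt) (hP : P = α • A + β • B + γ • C)
    (P' : Pt)
    (hP'' : P' = (α * β + β * γ + γ * α)⁻¹ • ((β * γ) • A + (γ * α) • B + (α * β) • C))
    (Q : Pt) (hQ : Q = G - (2:ℝ)⁻¹ • (P' - G))
    (Q' : Pt) (hQ' : Q' = G - (2:ℝ)⁻¹ • (P - G))
    (a b c d e f : ℝ)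
    (hqA : qeval a b c d e f A = 0) (hqB : qeval a b c d e f B = 0)
    (hqC : qeval a b c d e f C = 0) (hqP : qeval a b c d e f P = 0)
    (hqQ : qeval a b c d e f Q = 0)
    :
    qeval a b c d e f P' = 0 ∧ qeval a b c d e f Q' = 0  := by
  have hconic {x y z : ℝ} (hxyz : x + y + z = 1) := qeval_eq_circumconic hqA hqB hqC hxyz
  set u := qpolar a b c d e f B C
  set v := qpolar a b c d e f C A
  set w := qpolar a b c d e f A B
  set t := (α * β + β * γ + γ * α)⁻¹
  have hP'_bary : P' = (t * (β * γ)) • A + (t * (γ * α)) • B + (t * (α * β)) • C := by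
    rw [hP'']
    module
  have hP'_sum : t * (β * γ) + t * (γ * α) + t * (α * β) = 1 := by
    linear_combination inv_mul_cancel₀ hs
  have hQ_bary : Q = ((1 - t * (β * γ)) / 2) • A + ((1 - t * (γ * α)) / 2) • B
      + ((1 - t * (α * β)) / 2) • C := by
    rw [hQ, hG, hP'_bary, centroid_sub_half_smul_sub_centroid]
  have hQ'_bary : Q' = ((1 - α) / 2) • A + ((1 - β) / 2) • B + ((1 - γ) / 2) • C := by
    rw [hQ', hG, hP, centroid_sub_half_smul_sub_centroid]
  have hCP : circumconic u v w α β γ = 0 := by rwa [← hconic hsum, ← hP]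
  have hCQ : t ^ 2 * α * β * γ * (u * α + v * β + w * γ) = 0 := by
    have h : circumconic u v w ((1 - t * (β * γ)) / 2) ((1 - t * (γ * α)) / 2)
        ((1 - t * (α * β)) / 2) = 0 := by
      rw [← hconic (by linarith), ← hQ_bary, hqQ]
    rw [circumconic_complement _ _ _ _ _ _ hP'_sum, circumconic_isotomic] at h
    unfold circumconic at hCP
    linear_combination 4 * h - t * hCP
  have hL : u * α + v * β + w * γ = 0 := by
    simpa [hα, hβ, hγ, hs, t] using hCQ
  constructor
  · rw [hP'_bary, hconic hP'_sum, circumconic_isotomic, hL, mul_zero]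
  · rw [hQ'_bary, hconic (by linarith), circumconic_complement _ _ _ _ _ _ hsum, hCP, hL]
    norm_num

theorem stmt0
    (A B C : Pt) (hABC : AffineIndependent ℝ ![A, B, C])
    (α β γ : ℝ) (hsum : α + β + γ = 1)
    (hα : α ≠ 0) (hβ : β ≠ 0) (hγ : γ ≠ 0)
    (hβγ : β + γ ≠ 0) (hγα : γ + α ≠ 0) (hαβ : α + β ≠ 0)
    (hab : α ≠ β) (hbc : β ≠ γ) (hca : γ ≠ α)
    (hs : α * β + β * γ + γ * α ≠ 0)
    (G : Pt) (hG : G = (3:ℝ)⁻¹ • (A + B + C))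
    (P : Pt) (hP : P = α • A + β • B + γ • C)
    (P' : Pt)
    (hP'' : P' = (α * β + β * γ + γ * α)⁻¹ • ((β * γ) • A + (γ * α) • B + (α * β) • C))
    (Q : Pt) (hQ : Q = G - (2:ℝ)⁻¹ • (P' - G))
    (Q' : Pt) (hQ' : Q' = G - (2:ℝ)⁻¹ • (P - G))
    (a b c d e f : ℝ) (hq : (a, b, c, d, e, f) ≠ (0, 0, 0, 0, 0, 0))
    (hqA : qeval a b c d e f A = 0) (hqB : qeval a b c d e f B = 0)
    (hqC : qeval a b c d e f C = 0) (hqP : qeval a b c d e f P = 0)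
    (hqQ : qeval a b c d e f Q = 0)
    :
    qeval a b c d e f P' = 0 ∧ qeval a b c d e f Q' = 0 :=
  stmt0_general A B C α β γ hsum hα hβ hγ hs G hG P hP P' hP'' Q hQ Q' hQ' a b c d e f hqA hqB hqC
    hqP hqQ
end
end

section
/- Every quadratic polynomial q on ℝ² with nonzero coefficient vector that vanishes at A, B, C, P, Q also vanishes at the six points T_P(T_{P'}⁻¹(N)) and T_{P'}(T_P⁻¹(N)) for N ∈ {A, B, C}. (These six points are the images λ⁻¹(A), λ⁻¹(B), λ⁻¹(C), λ(A), λ(B), λ(C) of the vertices under λ = T_{P'}∘T_P⁻¹, and they all lie on the conic 𝒞_P = ABCPQ.) -/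
noncomputable section

/-!
In barycentric coordinates `(u, v, w)` with respect to `ABC`, a quadratic vanishing at the
vertices reads `X uv + Y uw + Z vw`, and passing through `P = (α, β, γ)` and
`Q = (α(β+γ) : β(γ+α) : γ(α+β))` imposes two linear conditions on `(X, Y, Z)`.
The cevian maps act on barycentrics by explicit matrices, giving
`T_P T_{P'}⁻¹ A = (α(β+γ) : β(γ-α) : γ(β-α))` and `T_{P'} T_P⁻¹ A = (β+γ : α-γ : α-β)`;
the conic equation at these points is a linear combination of the two conditions.
Everything is invariant under the cyclic relabelling `(A, α) → (B, β) → (C, γ)`, which gives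
the other vertices.
-/

section Cevian

variable {K V W : Type*} [Field K] [AddCommGroup V] [Module K V] [AddCommGroup W] [Module K W]

theorem AffineMap.map_smul_add_smul_add_smul (f : V →ᵃ[K] W) (x y z : V) {u v w : K}
    (h : u + v + w = 1) : f (u • x + v • y + w • z) = u • f x + v • f y + w • f z := by
  rw [f.decomp]
  simp only [Pi.add_apply, map_add, map_smul]
  linear_combination (norm := module) -h • f 0

def IsCevianMap (T : V ≃ᵃ[K] V) (A B C : V) (p q r : K) : Prop :=
  T A = (q + r)⁻¹ • (q • B + r • C) ∧ T B = (r + p)⁻¹ • (p • A + r • C) ∧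
    T C = (p + q)⁻¹ • (p • A + q • B)

variable {T : V ≃ᵃ[K] V} {A B C : V} {p q r : K}

theorem IsCevianMap.rotate (h : IsCevianMap T A B C p q r) : IsCevianMap T B C A q r p :=
  ⟨by rw [h.2.1, add_comm (p • A)], by rw [h.2.2, add_comm (p • A), add_comm p q], h.1⟩

theorem IsCevianMap.apply (h : IsCevianMap T A B C p q r) {u v w : K} (huvw : u + v + w = 1) :
    T (u • A + v • B + w • C) = (v * p / (r + p) + w * p / (p + q)) • A +
      (u * q / (q + r) + w * q / (p + q)) • B + (u * r / (q + r) + v * r / (r + p)) • C := by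
  rw [← T.coe_toAffineMap, T.toAffineMap.map_smul_add_smul_add_smul A B C huvw]
  simp only [AffineEquiv.coe_toAffineMap, h.1, h.2.1, h.2.2]
  match_scalars <;> ring

theorem IsCevianMap.symm_apply_left [CharZero K] (h : IsCevianMap T A B C p q r) (hp : p ≠ 0)
    (hqr : q + r ≠ 0) (hrp : r + p ≠ 0) (hpq : p + q ≠ 0) :
    T.symm A = (-(q + r) / (2 * p)) • A + ((r + p) / (2 * p)) • B + ((p + q) / (2 * p)) • C := by
  rw [AffineEquiv.symm_apply_eq, h.apply (by field_simp; ring)]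
  match_scalars <;> (field_simp; ring)

theorem isCevianMap_isotomic {α β γ : K} (hα : α ≠ 0) (hβ : β ≠ 0) (hγ : γ ≠ 0)
    (hA : T A = (β + γ)⁻¹ • (γ • B + β • C)) (hB : T B = (γ + α)⁻¹ • (γ • A + α • C))
    (hC : T C = (α + β)⁻¹ • (β • A + α • B)) :
    IsCevianMap T A B C (β * γ) (γ * α) (α * β) := by
  refine ⟨?_, ?_, ?_⟩
  · rw [hA, show γ * α + α * β = α * (β + γ) by ring]
    match_scalars <;> (rw [mul_inv]; field_simp)
  · rw [hB, show α * β + β * γ = β * (γ + α) by ring]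
    match_scalars <;> (rw [mul_inv]; field_simp)
  · rw [hC, show β * γ + γ * α = γ * (α + β) by ring]
    match_scalars <;> (rw [mul_inv]; field_simp)

section Composition

variable [CharZero K] {T' : V ≃ᵃ[K] V} {α β γ : K}
  (hT : IsCevianMap T A B C α β γ) (hT' : IsCevianMap T' A B C (β * γ) (γ * α) (α * β))
  (hα : α ≠ 0) (hβ : β ≠ 0) (hγ : γ ≠ 0) (hβγ : β + γ ≠ 0) (hγα : γ + α ≠ 0) (hαβ : α + β ≠ 0)
include hT hT' hα hβ hγ hβγ hγα hαβ

theorem cevian_apply_isotomic_symm_apply_left :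
    T (T'.symm A) = (α * (β + γ) / (2 * β * γ)) • A + (β * (γ - α) / (2 * β * γ)) • B +
      (γ * (β - α) / (2 * β * γ)) • C := by
  rw [hT'.symm_apply_left (mul_ne_zero hβ hγ)
      (by rw [show γ * α + α * β = α * (β + γ) by ring]; exact mul_ne_zero hα hβγ)
      (by rw [show α * β + β * γ = β * (γ + α) by ring]; exact mul_ne_zero hβ hγα)
      (by rw [show β * γ + γ * α = γ * (α + β) by ring]; exact mul_ne_zero hγ hαβ),
    hT.apply (by field_simp; ring)]
  match_scalars <;> (field_simp; ring)

theorem isotomic_apply_cevian_symm_apply_left :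
    T' (T.symm A) = ((β + γ) / (2 * α)) • A + ((α - γ) / (2 * α)) • B + ((α - β) / (2 * α)) • C := by
  rw [hT.symm_apply_left hα hβγ hγα hαβ, hT'.apply (by field_simp; ring)]
  have hγβ : γ + β ≠ 0 := by rwa [add_comm]
  have hβα : β + α ≠ 0 := by rwa [add_comm]
  have hαγ : α + γ ≠ 0 := by rwa [add_comm]
  match_scalars <;> (field_simp; ring)

end Composition

def HasCircumconicForm (φ : V → K) (A B C : V) (X Y Z : K) : Prop :=
  ∀ u v w : K, u + v + w = 1 → φ (u • A + v • B + w • C) = u * v * X + u * w * Y + v * w * Z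

namespace HasCircumconicForm

variable {φ : V → K} {X Y Z : K}

theorem rotate (hφ : HasCircumconicForm φ A B C X Y Z) : HasCircumconicForm φ B C A Z X Y := by
  intro u v w h
  rw [show u • B + v • C + w • A = w • A + u • B + v • C by abel,
    hφ w u v (by linear_combination h)]
  ring

theorem apply_div_eq_zero_iff (hφ : HasCircumconicForm φ A B C X Y Z) {u v w t : K} (ht : t ≠ 0)
    (h : u + v + w = t) :
    φ ((u / t) • A + (v / t) • B + (w / t) • C) = 0 ↔ u * v * X + u * w * Y + v * w * Z = 0 := by
  rw [hφ _ _ _ (by rw [← add_div, ← add_div, h, div_self ht]),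
    show u / t * (v / t) * X + u / t * (w / t) * Y + v / t * (w / t) * Z =
      (u * v * X + u * w * Y + v * w * Z) / t ^ 2 by field_simp]
  simp [ht]

end HasCircumconicForm

section Vertices

variable [CharZero K] {T' : V ≃ᵃ[K] V} {φ : V → K} {α β γ X Y Z : K}
  (hφ : HasCircumconicForm φ A B C X Y Z)
  (hT : IsCevianMap T A B C α β γ) (hT' : IsCevianMap T' A B C (β * γ) (γ * α) (α * β))
  (hP : α * β * X + α * γ * Y + β * γ * Z = 0)
  (hQ : α * (β + γ) * (β * (γ + α)) * X + α * (β + γ) * (γ * (α + β)) * Y +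
    β * (γ + α) * (γ * (α + β)) * Z = 0)
  (hα : α ≠ 0) (hβ : β ≠ 0) (hγ : γ ≠ 0) (hβγ : β + γ ≠ 0) (hγα : γ + α ≠ 0) (hαβ : α + β ≠ 0)
include hφ hT hT' hP hQ hα hβ hγ hβγ hγα hαβ

theorem HasCircumconicForm.cevian_isotomic_left :
    φ (T (T'.symm A)) = 0 ∧ φ (T' (T.symm A)) = 0 := by
  rw [cevian_apply_isotomic_symm_apply_left hT hT' hα hβ hγ hβγ hγα hαβ,
    isotomic_apply_cevian_symm_apply_left hT hT' hα hβ hγ hβγ hγα hαβ,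
    hφ.apply_div_eq_zero_iff (by simp [hβ, hγ]) (by ring),
    hφ.apply_div_eq_zero_iff (by simp [hα]) (by ring)]
  refine ⟨by linear_combination (-2 * α * (β + γ)) * hP + hQ, ?_⟩
  have h : α * β * γ *
      ((β + γ) * (α - γ) * X + (β + γ) * (α - β) * Y + (α - γ) * (α - β) * Z) = 0 := by
    linear_combination ((β + γ) * (α * (β + γ - α) + β * γ)) * hP + (α - β - γ) * hQ
  simpa [hα, hβ, hγ] using h

theorem HasCircumconicForm.cevian_isotomic :
    ∀ N ∈ ({A, B, C} : Set V), φ (T (T'.symm N)) = 0 ∧ φ (T' (T.symm N)) = 0 := by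
  rintro N (rfl | rfl | rfl)
  · exact hφ.cevian_isotomic_left hT hT' hP hQ hα hβ hγ hβγ hγα hαβ
  · exact hφ.rotate.cevian_isotomic_left hT.rotate hT'.rotate (by linear_combination hP)
      (by linear_combination hQ) hβ hγ hα hγα hαβ hβγ
  · exact hφ.rotate.rotate.cevian_isotomic_left hT.rotate.rotate hT'.rotate.rotate
      (by linear_combination hP) (by linear_combination hQ) hγ hα hβ hαβ hβγ hγα

end Vertices

end Cevian

theorem qeval_hasCircumconicForm {a b c d e f : ℝ} {A B C : Pt} (hA : qeval a b c d e f A = 0)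
    (hB : qeval a b c d e f B = 0) (hC : qeval a b c d e f C = 0) :
    ∃ X Y Z, HasCircumconicForm (qeval a b c d e f) A B C X Y Z := by
  refine ⟨4 * qeval a b c d e f ((2:ℝ)⁻¹ • (A + B)), 4 * qeval a b c d e f ((2:ℝ)⁻¹ • (A + C)),
    4 * qeval a b c d e f ((2:ℝ)⁻¹ • (B + C)), fun u v w h => ?_⟩
  obtain rfl : w = 1 - u - v := by linear_combination h
  simp only [qeval, PiLp.add_apply, PiLp.smul_apply, smul_eq_mul] at *
  linear_combination (u ^ 2 - u * v - u * (1 - u - v)) * hA +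
    (v ^ 2 - u * v - v * (1 - u - v)) * hB + ((1 - u - v) ^ 2 - (u + v) * (1 - u - v)) * hC

theorem stmt1_general
    (A B C : Pt)
    (α β γ : ℝ) (hsum : α + β + γ = 1)
    (hα : α ≠ 0) (hβ : β ≠ 0) (hγ : γ ≠ 0)
    (hβγ : β + γ ≠ 0) (hγα : γ + α ≠ 0) (hαβ : α + β ≠ 0)
    (hs : α * β + β * γ + γ * α ≠ 0)
    (G : Pt) (hG : G = (3:ℝ)⁻¹ • (A + B + C))
    (P : Pt) (hP : P = α • A + β • B + γ • C)
    (P' : Pt)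
    (hP'' : P' = (α * β + β * γ + γ * α)⁻¹ • ((β * γ) • A + (γ * α) • B + (α * β) • C))
    (Q : Pt) (hQ : Q = G - (2:ℝ)⁻¹ • (P' - G))
    (D E F : Pt)
    (hD : D = (β + γ)⁻¹ • (β • B + γ • C))
    (hE : E = (γ + α)⁻¹ • (α • A + γ • C))
    (hF : F = (α + β)⁻¹ • (α • A + β • B))
    (D₃ E₃ F₃ : Pt)
    (hD₃ : D₃ = (β + γ)⁻¹ • (γ • B + β • C))
    (hE₃ : E₃ = (γ + α)⁻¹ • (γ • A + α • C))
    (hF₃ : F₃ = (α + β)⁻¹ • (β • A + α • B))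
    (TP : Pt ≃ᵃ[ℝ] Pt) (hTPA : TP A = D) (hTPB : TP B = E) (hTPC : TP C = F)
    (TP' : Pt ≃ᵃ[ℝ] Pt) (hTP'A : TP' A = D₃) (hTP'B : TP' B = E₃) (hTP'C : TP' C = F₃)
    (a b c d e f : ℝ)
    (hqA : qeval a b c d e f A = 0) (hqB : qeval a b c d e f B = 0)
    (hqC : qeval a b c d e f C = 0) (hqP : qeval a b c d e f P = 0)
    (hqQ : qeval a b c d e f Q = 0)
    :
    ∀ N ∈ ({A, B, C} : Set Pt),
      qeval a b c d e f (TP (TP'.symm N)) = 0 ∧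
      qeval a b c d e f (TP' (TP.symm N)) = 0 := by
  have hTP : IsCevianMap TP A B C α β γ := ⟨hTPA.trans hD, hTPB.trans hE, hTPC.trans hF⟩
  have hTP' : IsCevianMap TP' A B C (β * γ) (γ * α) (α * β) :=
    isCevianMap_isotomic hα hβ hγ (hTP'A.trans hD₃) (hTP'B.trans hE₃) (hTP'C.trans hF₃)
  obtain ⟨X, Y, Z, hφ⟩ := qeval_hasCircumconicForm hqA hqB hqC
  have hPXYZ : α * β * X + α * γ * Y + β * γ * Z = 0 := by rw [← hφ α β γ hsum, ← hP, hqP]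
  have hQ_bary : Q = (α * (β + γ) / (2 * (α * β + β * γ + γ * α))) • A +
      (β * (γ + α) / (2 * (α * β + β * γ + γ * α))) • B +
      (γ * (α + β) / (2 * (α * β + β * γ + γ * α))) • C := by
    rw [hQ, hG, hP'']
    generalize hs_def : α * β + β * γ + γ * α = s at hs ⊢
    match_scalars <;> (field_simp; rw [← hs_def]; ring)
  have hQXYZ := (hφ.apply_div_eq_zero_iff (mul_ne_zero two_ne_zero hs) (by ring)).1 (hQ_bary ▸ hqQ)
  exact hφ.cevian_isotomic hTP hTP' hPXYZ hQXYZ hα hβ hγ hβγ hγα hαβ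

theorem stmt1
    (A B C : Pt) (hABC : AffineIndependent ℝ ![A, B, C])
    (α β γ : ℝ) (hsum : α + β + γ = 1)
    (hα : α ≠ 0) (hβ : β ≠ 0) (hγ : γ ≠ 0)
    (hβγ : β + γ ≠ 0) (hγα : γ + α ≠ 0) (hαβ : α + β ≠ 0)
    (hab : α ≠ β) (hbc : β ≠ γ) (hca : γ ≠ α)
    (hs : α * β + β * γ + γ * α ≠ 0)
    (G : Pt) (hG : G = (3:ℝ)⁻¹ • (A + B + C))
    (P : Pt) (hP : P = α • A + β • B + γ • C)
    (P' : Pt)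
    (hP'' : P' = (α * β + β * γ + γ * α)⁻¹ • ((β * γ) • A + (γ * α) • B + (α * β) • C))
    (Q : Pt) (hQ : Q = G - (2:ℝ)⁻¹ • (P' - G))
    (Q' : Pt) (hQ' : Q' = G - (2:ℝ)⁻¹ • (P - G))
    (D E F : Pt)
    (hD : D = (β + γ)⁻¹ • (β • B + γ • C))
    (hE : E = (γ + α)⁻¹ • (α • A + γ • C))
    (hF : F = (α + β)⁻¹ • (α • A + β • B))
    (D₃ E₃ F₃ : Pt)
    (hD₃ : D₃ = (β + γ)⁻¹ • (γ • B + β • C))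
    (hE₃ : E₃ = (γ + α)⁻¹ • (γ • A + α • C))
    (hF₃ : F₃ = (α + β)⁻¹ • (β • A + α • B))
    (TP : Pt ≃ᵃ[ℝ] Pt) (hTPA : TP A = D) (hTPB : TP B = E) (hTPC : TP C = F)
    (TP' : Pt ≃ᵃ[ℝ] Pt) (hTP'A : TP' A = D₃) (hTP'B : TP' B = E₃) (hTP'C : TP' C = F₃)
    (a b c d e f : ℝ) (hq : (a, b, c, d, e, f) ≠ (0, 0, 0, 0, 0, 0))
    (hqA : qeval a b c d e f A = 0) (hqB : qeval a b c d e f B = 0)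
    (hqC : qeval a b c d e f C = 0) (hqP : qeval a b c d e f P = 0)
    (hqQ : qeval a b c d e f Q = 0)
    :
    ∀ N ∈ ({A, B, C} : Set Pt),
      qeval a b c d e f (TP (TP'.symm N)) = 0 ∧
      qeval a b c d e f (TP' (TP.symm N)) = 0 :=
  stmt1_general A B C α β γ hsum hα hβ hγ hβγ hγα hαβ hs G hG P hP P' hP'' Q hQ D E F hD hE hF D₃ E₃
    F₃ hD₃ hE₃ hF₃ TP hTPA hTPB hTPC TP' hTP'A hTP'B hTP'C a b c d e f hqA hqB hqC hqP hqQ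
end
end

section
/- The four points P, P', T_P(P'), and T_{P'}(P) are collinear. -/
/-! Both affine maps are evaluated through barycentric coordinates: `T_P(P')` is the combination
of `D, E, F` with the weights `βγ/s, γα/s, αβ/s` of `P'`, and `T_{P'}(P)` the combination of
`D₃, E₃, F₃` with the weights `α, β, γ` of `P`. Expanding in `A, B, C` gives
`T_P(P') = P + t (P' - P)` and `T_{P'}(P) = P + t' (P' - P)` with
`t = -αβγ / ((α+β)(β+γ)(γ+α))` and `t' = s / ((α+β)(β+γ)(γ+α))`,
so both images lie on the line `PP'`. -/

noncomputable section

open AffineMap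

theorem AffineMap.map_smul_add_smul_add_smul_s3 {k V W : Type*} [Ring k] [AddCommGroup V]
    [Module k V] [AddCommGroup W] [Module k W] (f : V →ᵃ[k] W) {a b c : k} (h : a + b + c = 1)
    (x y z : V) : f (a • x + b • y + c • z) = a • f x + b • f y + c • f z := by
  have hf : ∀ v, f v = f.linear v + f 0 := fun v => congrFun f.decomp v
  have hrhs : a • f x + b • f y + c • f z
      = a • f.linear x + b • f.linear y + c • f.linear z + (a + b + c) • f 0 := by
    simp only [hf x, hf y, hf z, smul_add, add_smul]
    abel
  rw [hrhs, h, one_smul, hf, map_add, map_add, map_smul, map_smul, map_smul]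

section Cevian

variable {K V : Type*} [Field K] [AddCommGroup V] [Module K V] {α β γ : K}

def isotomicConj (α β γ : K) (A B C : V) : V :=
  (α * β + β * γ + γ * α)⁻¹ • ((β * γ) • A + (γ * α) • B + (α * β) • C)

theorem cevianMap_isotomicConj_eq_lineMap (hsum : α + β + γ = 1) (hβγ : β + γ ≠ 0)
    (hγα : γ + α ≠ 0) (hαβ : α + β ≠ 0) (hs : α * β + β * γ + γ * α ≠ 0) {A B C : V}
    (f : V →ᵃ[K] V) (hfA : f A = (β + γ)⁻¹ • (β • B + γ • C))
    (hfB : f B = (γ + α)⁻¹ • (α • A + γ • C)) (hfC : f C = (α + β)⁻¹ • (α • A + β • B)) :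
    f (isotomicConj α β γ A B C) = lineMap (α • A + β • B + γ • C) (isotomicConj α β γ A B C)
      (-(α * β * γ) / ((α + β) * (β + γ) * (γ + α))) := by
  have hP' : isotomicConj α β γ A B C = (β * γ / (α * β + β * γ + γ * α)) • A
      + (γ * α / (α * β + β * γ + γ * α)) • B + (α * β / (α * β + β * γ + γ * α)) • C := by
    simp only [isotomicConj, div_eq_inv_mul, mul_smul, smul_add]
  set s := α * β + β * γ + γ * α with hs_def
  have hweights : β * γ / s + γ * α / s + α * β / s = 1 := by
    rw [← add_div, ← add_div, div_eq_one_iff_eq hs]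
    ring
  rw [hP', f.map_smul_add_smul_add_smul_s3 hweights, hfA, hfB, hfC, lineMap_apply_module]
  -- `s` stays an atom and `γ` is eliminated only after `field_simp`, so that the denominators
  -- are still literally those declared nonzero in the hypotheses.
  match_scalars <;> field_simp <;> rw [hs_def] <;>
    obtain rfl : γ = 1 - α - β := by linear_combination hsum
  all_goals ring

theorem isotomicCevianMap_eq_lineMap (hsum : α + β + γ = 1) (hβγ : β + γ ≠ 0)
    (hγα : γ + α ≠ 0) (hαβ : α + β ≠ 0) (hs : α * β + β * γ + γ * α ≠ 0) {A B C : V}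
    (f : V →ᵃ[K] V) (hfA : f A = (β + γ)⁻¹ • (γ • B + β • C))
    (hfB : f B = (γ + α)⁻¹ • (γ • A + α • C)) (hfC : f C = (α + β)⁻¹ • (β • A + α • B)) :
    f (α • A + β • B + γ • C) = lineMap (α • A + β • B + γ • C) (isotomicConj α β γ A B C)
      ((α * β + β * γ + γ * α) / ((α + β) * (β + γ) * (γ + α))) := by
  rw [f.map_smul_add_smul_add_smul_s3 hsum, hfA, hfB, hfC, lineMap_apply_module, isotomicConj]
  set s := α * β + β * γ + γ * α with hs_def
  match_scalars <;> field_simp <;> rw [hs_def] <;>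
    obtain rfl : γ = 1 - α - β := by linear_combination hsum
  all_goals ring

end Cevian

theorem stmt3_general
    (A B C : Pt)
    (α β γ : ℝ) (hsum : α + β + γ = 1)
    (hβγ : β + γ ≠ 0) (hγα : γ + α ≠ 0) (hαβ : α + β ≠ 0)
    (hs : α * β + β * γ + γ * α ≠ 0)
    (P : Pt) (hP : P = α • A + β • B + γ • C)
    (P' : Pt)
    (hP'' : P' = (α * β + β * γ + γ * α)⁻¹ • ((β * γ) • A + (γ * α) • B + (α * β) • C))
    (D E F : Pt)
    (hD : D = (β + γ)⁻¹ • (β • B + γ • C))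
    (hE : E = (γ + α)⁻¹ • (α • A + γ • C))
    (hF : F = (α + β)⁻¹ • (α • A + β • B))
    (D₃ E₃ F₃ : Pt)
    (hD₃ : D₃ = (β + γ)⁻¹ • (γ • B + β • C))
    (hE₃ : E₃ = (γ + α)⁻¹ • (γ • A + α • C))
    (hF₃ : F₃ = (α + β)⁻¹ • (β • A + α • B))
    (TP : Pt →ᵃ[ℝ] Pt) (hTPA : TP A = D) (hTPB : TP B = E) (hTPC : TP C = F)
    (TP' : Pt →ᵃ[ℝ] Pt) (hTP'A : TP' A = D₃) (hTP'B : TP' B = E₃) (hTP'C : TP' C = F₃)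
    :
    Collinear ℝ ({P, P', TP P', TP' P} : Set Pt) := by
  have hreorder : ({P, P', TP P', TP' P} : Set Pt) = {TP P', TP' P, P, P'} := by
    ext
    simp only [Set.mem_insert_iff, Set.mem_singleton_iff]
    tauto
  have hP' : P' = isotomicConj α β γ A B C := hP''
  subst hP hP' hD hE hF hD₃ hE₃ hF₃
  rw [hreorder]
  refine collinear_insert_insert_of_mem_affineSpan_pair ?_ ?_
  · rw [cevianMap_isotomicConj_eq_lineMap hsum hβγ hγα hαβ hs TP hTPA hTPB hTPC]
    exact lineMap_mem_affineSpan_pair _ _ _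
  · rw [isotomicCevianMap_eq_lineMap hsum hβγ hγα hαβ hs TP' hTP'A hTP'B hTP'C]
    exact lineMap_mem_affineSpan_pair _ _ _

theorem stmt3
    (A B C : Pt) (hABC : AffineIndependent ℝ ![A, B, C])
    (α β γ : ℝ) (hsum : α + β + γ = 1)
    (hα : α ≠ 0) (hβ : β ≠ 0) (hγ : γ ≠ 0)
    (hβγ : β + γ ≠ 0) (hγα : γ + α ≠ 0) (hαβ : α + β ≠ 0)
    (hs : α * β + β * γ + γ * α ≠ 0)
    (P : Pt) (hP : P = α • A + β • B + γ • C)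
    (P' : Pt)
    (hP'' : P' = (α * β + β * γ + γ * α)⁻¹ • ((β * γ) • A + (γ * α) • B + (α * β) • C))
    (D E F : Pt)
    (hD : D = (β + γ)⁻¹ • (β • B + γ • C))
    (hE : E = (γ + α)⁻¹ • (α • A + γ • C))
    (hF : F = (α + β)⁻¹ • (α • A + β • B))
    (D₃ E₃ F₃ : Pt)
    (hD₃ : D₃ = (β + γ)⁻¹ • (γ • B + β • C))
    (hE₃ : E₃ = (γ + α)⁻¹ • (γ • A + α • C))
    (hF₃ : F₃ = (α + β)⁻¹ • (β • A + α • B))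
    (TP : Pt →ᵃ[ℝ] Pt) (hTPA : TP A = D) (hTPB : TP B = E) (hTPC : TP C = F)
    (TP' : Pt →ᵃ[ℝ] Pt) (hTP'A : TP' A = D₃) (hTP'B : TP' B = E₃) (hTP'C : TP' C = F₃)
    :
    Collinear ℝ ({P, P', TP P', TP' P} : Set Pt) :=
  stmt3_general A B C α β γ hsum hβγ hγα hαβ hs P hP P' hP'' D E F hD hE hF D₃ E₃ F₃ hD₃ hE₃ hF₃ TP
    hTPA hTPB hTPC TP' hTP'A hTP'B hTP'C
end
end

section
/- One has 2Q − P = 2Q' − P' (so the common point V := 2Q − P is the reflection of P in Q and also the reflection of P' in Q', and V is the intersection PQ·P'Q' of the lines PQ and P'Q'). Moreover the four points G, V, the midpoint (P+P')/2 of segment PP', and the midpoint (Q+Q')/2 of segment QQ' are collinear. -/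
noncomputable section

theorem stmt4
    (A B C : Pt) (hABC : AffineIndependent ℝ ![A, B, C])
    (α β γ : ℝ) (hsum : α + β + γ = 1)
    (hα : α ≠ 0) (hβ : β ≠ 0) (hγ : γ ≠ 0)
    (hβγ : β + γ ≠ 0) (hγα : γ + α ≠ 0) (hαβ : α + β ≠ 0)
    (hab : α ≠ β) (hbc : β ≠ γ) (hca : γ ≠ α)
    (hs : α * β + β * γ + γ * α ≠ 0)
    (G : Pt) (hG : G = (3:ℝ)⁻¹ • (A + B + C))
    (P : Pt) (hP : P = α • A + β • B + γ • C)
    (P' : Pt)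
    (hP'' : P' = (α * β + β * γ + γ * α)⁻¹ • ((β * γ) • A + (γ * α) • B + (α * β) • C))
    (Q : Pt) (hQ : Q = G - (2:ℝ)⁻¹ • (P' - G))
    (Q' : Pt) (hQ' : Q' = G - (2:ℝ)⁻¹ • (P - G))
    :
    (2:ℝ) • Q - P = (2:ℝ) • Q' - P' ∧
    Collinear ℝ ({G, (2:ℝ) • Q - P, midpoint ℝ P P', midpoint ℝ Q Q'} : Set Pt) := by
  have hmPP : midpoint ℝ P P' = (2:ℝ)⁻¹ • (P + P') := midpoint_eq_smul_add ℝ P P'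
  have hmQQ : midpoint ℝ Q Q' = (2:ℝ)⁻¹ • (Q + Q') := midpoint_eq_smul_add ℝ Q Q'
  constructor
  · rw [hQ, hQ']; module
  · apply collinear_iff_of_mem (Set.mem_insert G _) |>.2
    refine ⟨midpoint ℝ P P' - G, ?_⟩
    intro p hp
    simp only [Set.mem_insert_iff, Set.mem_singleton_iff] at hp
    rcases hp with h | h | h | h <;> subst h
    · exact ⟨0, by simp⟩
    · refine ⟨-2, ?_⟩
      rw [hmPP]; simp only [vadd_eq_add, hQ]
      module
    · exact ⟨1, by simp⟩
    · refine ⟨-(2:ℝ)⁻¹, ?_⟩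
      rw [hmQQ, hmPP]; simp only [vadd_eq_add, hQ, hQ']
      module
end
end

section
/- Let G₁ = T_P(G) and G₂ = T_{P'}(G) be the centroids of the cevian triangles DEF and D₃E₃F₃ of P and P'. Then G is the midpoint of the segment G₁G₂, i.e. G = (G₁+G₂)/2, and the vector G₂ − G₁ is a scalar multiple of P' − P (the segment G₁G₂ is parallel to PP'). -/
noncomputable section

/-!
An affine map sends the centroid of a triangle to the centroid of its image, so `T_P(G)` and
`T_{P'}(G)` are the centroids of `DEF` and `D₃E₃F₃`. Swapping the two weights of a cevian foot
reflects it in the midpoint of its side, so `D + D₃ = B + C`, `E + E₃ = A + C`, `F + F₃ = A + B`,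
and the two centroids average to `G`. Their difference is a direct computation in barycentric
coordinates: `G₂ - G₁ = 2s / (3(α+β)(β+γ)(γ+α)) • (P' - P)`.
-/

section CevianFoot

variable {k V : Type*} [Field k] [AddCommGroup V] [Module k V]

theorem AffineMap.map_inv_three_smul_add_add {W : Type*} [AddCommGroup W] [Module k W]
    (f : V →ᵃ[k] W) (h3 : (3 : k) ≠ 0) (x y z : V) :
    f ((3 : k)⁻¹ • (x + y + z)) = (3 : k)⁻¹ • (f x + f y + f z) := by
  have hf : ∀ v, f v = f.linear v + f 0 := fun v => by
    simpa using f.map_vadd 0 v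
  rw [hf ((3 : k)⁻¹ • (x + y + z)), hf x, hf y, hf z]
  simp only [map_smul, map_add]
  match_scalars <;> norm_num [h3]

def cevianFoot (b c : k) (y z : V) : V := (b + c)⁻¹ • (b • y + c • z)

variable {b c : k} {y z : V}

theorem cevianFoot_add_cevianFoot_swap (h : b + c ≠ 0) :
    cevianFoot b c y z + cevianFoot c b y z = y + z := by
  rw [cevianFoot, cevianFoot, add_comm c b, ← smul_add,
    show b • y + c • z + (c • y + b • z) = (b + c) • (y + z) by module, inv_smul_smul₀ h]

theorem cevianFoot_swap_sub_cevianFoot :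
    cevianFoot c b y z - cevianFoot b c y z = ((c - b) / (b + c)) • (y - z) := by
  rw [cevianFoot, cevianFoot, add_comm c b, ← smul_sub, div_eq_inv_mul, mul_smul]
  congr 1
  module

theorem cevianFoot_swap_sum_sub_cevianFoot_sum {α β γ : k} (A B C : V) (hσ : α + β + γ ≠ 0)
    (hβγ : β + γ ≠ 0) (hαγ : α + γ ≠ 0) (hαβ : α + β ≠ 0)
    (hs : α * β + β * γ + γ * α ≠ 0) :
    (cevianFoot γ β B C + cevianFoot γ α A C + cevianFoot β α A B)
        - (cevianFoot β γ B C + cevianFoot α γ A C + cevianFoot α β A B)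
      = (2 * (α * β + β * γ + γ * α) * (α + β + γ) / ((α + β) * (β + γ) * (α + γ))) •
          ((α * β + β * γ + γ * α)⁻¹ • ((β * γ) • A + (γ * α) • B + (α * β) • C)
            - (α + β + γ)⁻¹ • (α • A + β • B + γ • C)) := by
  rw [show ∀ d e f d' e' f' : V, d' + e' + f' - (d + e + f) = (d' - d) + (e' - e) + (f' - f)
      from fun _ _ _ _ _ _ => by abel,
    cevianFoot_swap_sub_cevianFoot, cevianFoot_swap_sub_cevianFoot,
    cevianFoot_swap_sub_cevianFoot]
  -- `match_scalars` reorders sums, after which `field_simp` no longer sees the denominators as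
  -- nonzero; hence they are frozen as atoms first.
  generalize hs_def : α * β + β * γ + γ * α = s at hs ⊢
  generalize hσ_def : α + β + γ = σ at hσ ⊢
  generalize ha_def : β + γ = a at hβγ ⊢
  generalize hb_def : α + γ = b at hαγ ⊢
  generalize hc_def : α + β = c at hαβ ⊢
  match_scalars <;> field_simp <;> (subst hs_def hσ_def ha_def hb_def hc_def; ring)

end CevianFoot

theorem stmt6_general
    (A B C : Pt)
    (α β γ : ℝ) (hsum : α + β + γ = 1)
    (hβγ : β + γ ≠ 0) (hγα : γ + α ≠ 0) (hαβ : α + β ≠ 0)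
    (hs : α * β + β * γ + γ * α ≠ 0)
    (G : Pt) (hG : G = (3:ℝ)⁻¹ • (A + B + C))
    (P : Pt) (hP : P = α • A + β • B + γ • C)
    (P' : Pt)
    (hP'' : P' = (α * β + β * γ + γ * α)⁻¹ • ((β * γ) • A + (γ * α) • B + (α * β) • C))
    (D E F : Pt)
    (hD : D = (β + γ)⁻¹ • (β • B + γ • C))
    (hE : E = (γ + α)⁻¹ • (α • A + γ • C))
    (hF : F = (α + β)⁻¹ • (α • A + β • B))
    (D₃ E₃ F₃ : Pt)
    (hD₃ : D₃ = (β + γ)⁻¹ • (γ • B + β • C))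
    (hE₃ : E₃ = (γ + α)⁻¹ • (γ • A + α • C))
    (hF₃ : F₃ = (α + β)⁻¹ • (β • A + α • B))
    (TP : Pt →ᵃ[ℝ] Pt) (hTPA : TP A = D) (hTPB : TP B = E) (hTPC : TP C = F)
    (TP' : Pt →ᵃ[ℝ] Pt) (hTP'A : TP' A = D₃) (hTP'B : TP' B = E₃) (hTP'C : TP' C = F₃)
    :
    G = midpoint ℝ (TP G) (TP' G) ∧ ∃ k : ℝ, TP' G - TP G = k • (P' - P) := by
  have hTPG : TP G = (3 : ℝ)⁻¹ •
      (cevianFoot β γ B C + cevianFoot α γ A C + cevianFoot α β A B) := by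
    rw [hG, TP.map_inv_three_smul_add_add three_ne_zero, hTPA, hTPB, hTPC, hD, hE, hF]
    simp only [cevianFoot, add_comm γ α]
  have hTP'G : TP' G = (3 : ℝ)⁻¹ •
      (cevianFoot γ β B C + cevianFoot γ α A C + cevianFoot β α A B) := by
    rw [hG, TP'.map_inv_three_smul_add_add three_ne_zero, hTP'A, hTP'B, hTP'C, hD₃, hE₃, hF₃]
    simp only [cevianFoot, add_comm β γ, add_comm α β]
  have hαγ : α + γ ≠ 0 := add_comm γ α ▸ hγα
  constructor
  · have hBC := cevianFoot_add_cevianFoot_swap (y := B) (z := C) hβγ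
    have hAC := cevianFoot_add_cevianFoot_swap (y := A) (z := C) hαγ
    have hAB := cevianFoot_add_cevianFoot_swap (y := A) (z := B) hαβ
    rw [hTPG, hTP'G, hG, midpoint_eq_smul_add, invOf_eq_inv]
    linear_combination (norm := module) (-(6 : ℝ)⁻¹) • (hBC + hAC + hAB)
  · refine ⟨(3 : ℝ)⁻¹ * (2 * (α * β + β * γ + γ * α) * (α + β + γ) /
      ((α + β) * (β + γ) * (α + γ))), ?_⟩
    rw [hTP'G, hTPG, ← smul_sub, hP, hP'', mul_smul,
      cevianFoot_swap_sum_sub_cevianFoot_sum A B C (hsum ▸ one_ne_zero) hβγ hαγ hαβ hs, hsum,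
      inv_one, one_smul]

theorem stmt6
    (A B C : Pt) (hABC : AffineIndependent ℝ ![A, B, C])
    (α β γ : ℝ) (hsum : α + β + γ = 1)
    (hα : α ≠ 0) (hβ : β ≠ 0) (hγ : γ ≠ 0)
    (hβγ : β + γ ≠ 0) (hγα : γ + α ≠ 0) (hαβ : α + β ≠ 0)
    (hs : α * β + β * γ + γ * α ≠ 0)
    (G : Pt) (hG : G = (3:ℝ)⁻¹ • (A + B + C))
    (P : Pt) (hP : P = α • A + β • B + γ • C)
    (P' : Pt)
    (hP'' : P' = (α * β + β * γ + γ * α)⁻¹ • ((β * γ) • A + (γ * α) • B + (α * β) • C))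
    (D E F : Pt)
    (hD : D = (β + γ)⁻¹ • (β • B + γ • C))
    (hE : E = (γ + α)⁻¹ • (α • A + γ • C))
    (hF : F = (α + β)⁻¹ • (α • A + β • B))
    (D₃ E₃ F₃ : Pt)
    (hD₃ : D₃ = (β + γ)⁻¹ • (γ • B + β • C))
    (hE₃ : E₃ = (γ + α)⁻¹ • (γ • A + α • C))
    (hF₃ : F₃ = (α + β)⁻¹ • (β • A + α • B))
    (TP : Pt →ᵃ[ℝ] Pt) (hTPA : TP A = D) (hTPB : TP B = E) (hTPC : TP C = F)
    (TP' : Pt →ᵃ[ℝ] Pt) (hTP'A : TP' A = D₃) (hTP'B : TP' B = E₃) (hTP'C : TP' C = F₃)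
    :
    G = midpoint ℝ (TP G) (TP' G) ∧ ∃ k : ℝ, TP' G - TP G = k • (P' - P) :=
  stmt6_general A B C α β γ hsum hβγ hγα hαβ hs G hG P hP P' hP'' D E F hD hE hF D₃ E₃ F₃ hD₃ hE₃
    hF₃ TP hTPA hTPB hTPC TP' hTP'A hTP'B hTP'C
end
end

section
/- If X ∈ ℝ² satisfies T_P(T_{P'}(X)) = X (X is the fixed point of 𝒮₁ = T_P∘T_{P'}), then the point X' := η(X) satisfies T_{P'}(T_P(X')) = X' (it is a fixed point of 𝒮₂ = T_{P'}∘T_P), and X' − X is a scalar multiple of P' − P. (Thus the line joining the P-ceva conjugate of Q and the P'-ceva conjugate of Q' is parallel to PP'.) -/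
/-!
Write `Π = (α+β)(β+γ)(γ+α)`, `W = α²(β+γ)•A + β²(γ+α)•B + γ²(α+β)•C` and `N = α²(β+γ) + β²(γ+α)
+ γ²(α+β)` for the total weight of `W`. Checking at the vertices shows `Π • T_P (T_{P'} Y) =
(Π - N) • Y + W`, so `T_P ∘ T_{P'}` is a homothety with centre `W / N`; in particular a fixed point
`X` satisfies `N • X = W`, which forces `N ≠ 0`. Since `N = s - 3αβγ`, this says
`N • X = (N - s) • G + s • P`, and the same computation gives
`N • T_{P'} X = (N - s) • G + s • P'`. As `η` fixes `G` and sends `P` to `P'`, this means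
`η X = T_{P'} X`, so `η X` is fixed by `T_{P'} ∘ T_P` and `η X - X = (s / N) • (P' - P)`.
-/

noncomputable section

namespace AffineMap

variable {k V W : Type*} [CommRing k] [AddCommGroup V] [Module k V] [AddCommGroup W] [Module k W]

theorem smul_map_eq_of_smul_eq_smul_add_smul (T : V →ᵃ[k] W) {a b : k} {X P Q : V}
    (h : (a + b) • X = a • P + b • Q) : (a + b) • T X = a • T P + b • T Q := by
  have hT : ∀ v, T v = T.linear v + T 0 := fun v => congrFun T.decomp v
  rw [hT X, hT P, hT Q, smul_add, ← map_smul, h, map_add, map_smul, map_smul]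
  module

theorem smul_map_eq_of_smul_eq_smul_add_smul_add_smul (T : V →ᵃ[k] W) {a b c : k} {X A B C : V}
    (h : (a + b + c) • X = a • A + b • B + c • C) :
    (a + b + c) • T X = a • T A + b • T B + c • T C := by
  have hT : ∀ v, T v = T.linear v + T 0 := fun v => congrFun T.decomp v
  rw [hT X, hT A, hT B, hT C, smul_add, ← map_smul, h, map_add, map_add, map_smul, map_smul,
    map_smul]
  module

end AffineMap

namespace AffineIndependent

variable {k V : Type*} [Field k] [AddCommGroup V] [Module k V] {A B C : V}

theorem exists_eq_smul_add_smul_add_smul [FiniteDimensional k V] (hV : Module.finrank k V = 2)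
    (h : AffineIndependent k ![A, B, C]) (X : V) :
    ∃ x y z : k, x + y + z = 1 ∧ X = x • A + y • B + z • C := by
  have htop : affineSpan k (Set.range ![A, B, C]) = ⊤ := by
    rw [h.affineSpan_eq_top_iff_card_eq_finrank_add_one, hV]
    simp
  obtain ⟨w, hw1, hw⟩ :=
    eq_affineCombination_of_mem_affineSpan_of_fintype (htop ▸ AffineSubspace.mem_top k V X)
  refine ⟨w 0, w 1, w 2, by simpa [Fin.sum_univ_three] using hw1, ?_⟩
  rw [hw, Finset.univ.affineCombination_eq_linear_combination _ _ hw1]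
  simp [Fin.sum_univ_three]

theorem eq_zero_of_smul_add_smul_add_smul_eq_zero (h : AffineIndependent k ![A, B, C])
    {a b c : k} (hsum : a + b + c = 0) (hcomb : a • A + b • B + c • C = 0) : a = 0 :=
  h.eq_zero_of_sum_eq_zero (s := Finset.univ) (w := ![a, b, c])
    (by simpa [Fin.sum_univ_three] using hsum) (by simpa [Fin.sum_univ_three] using hcomb) 0
    (Finset.mem_univ _)

end AffineIndependent

section CevianComposite

variable {k V : Type*} [Field k] [AddCommGroup V] [Module k V] {A B C : V} {α β γ : k}
  {TP TP' : V →ᵃ[k] V}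

theorem cevian_comp_smul_apply [FiniteDimensional k V] (hV : Module.finrank k V = 2)
    (hABC : AffineIndependent k ![A, B, C])
    (hTPA : (β + γ) • TP A = β • B + γ • C) (hTPB : (γ + α) • TP B = α • A + γ • C)
    (hTPC : (α + β) • TP C = α • A + β • B)
    (hTP'A : (β + γ) • TP' A = γ • B + β • C) (hTP'B : (γ + α) • TP' B = γ • A + α • C)
    (hTP'C : (α + β) • TP' C = β • A + α • B) (Y : V) :
    ((α + β) * (β + γ) * (γ + α)) • TP (TP' Y) =
      ((α + β) * (β + γ) * (γ + α) - (α ^ 2 * (β + γ) + β ^ 2 * (γ + α) + γ ^ 2 * (α + β))) • Y +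
        ((α ^ 2 * (β + γ)) • A + (β ^ 2 * (γ + α)) • B + (γ ^ 2 * (α + β)) • C) := by
  have hSA := TP.smul_map_eq_of_smul_eq_smul_add_smul (add_comm β γ ▸ hTP'A)
  have hSB := TP.smul_map_eq_of_smul_eq_smul_add_smul hTP'B
  have hSC := TP.smul_map_eq_of_smul_eq_smul_add_smul (add_comm α β ▸ hTP'C)
  set p := (α + β) * (β + γ) * (γ + α) with hp
  set n := α ^ 2 * (β + γ) + β ^ 2 * (γ + α) + γ ^ 2 * (α + β) with hn
  set W := (α ^ 2 * (β + γ)) • A + (β ^ 2 * (γ + α)) • B + (γ ^ 2 * (α + β)) • C with hW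
  have hA : p • TP (TP' A) = (p - n) • A + W := by
    rw [hp, hn, hW]
    linear_combination (norm := module) ((α + β) * (γ + α)) • hSA + ((α + β) * γ) • hTPB +
      ((γ + α) * β) • hTPC
  have hB : p • TP (TP' B) = (p - n) • B + W := by
    rw [hp, hn, hW]
    linear_combination (norm := module) ((α + β) * (β + γ)) • hSB + ((α + β) * γ) • hTPA +
      ((β + γ) * α) • hTPC
  have hC : p • TP (TP' C) = (p - n) • C + W := by
    rw [hp, hn, hW]
    linear_combination (norm := module) ((β + γ) * (γ + α)) • hSC + ((γ + α) * β) • hTPA +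
      ((β + γ) * α) • hTPB
  obtain ⟨x, y, z, hxyz, rfl⟩ := hABC.exists_eq_smul_add_smul_add_smul hV Y
  have hS := (TP.comp TP').smul_map_eq_of_smul_eq_smul_add_smul_add_smul
    (X := x • A + y • B + z • C) (by rw [hxyz, one_smul])
  rw [hxyz, one_smul] at hS
  simp only [AffineMap.comp_apply] at hS
  rw [hS]
  linear_combination (norm := module) x • hA + y • hB + z • hC + hxyz • W

theorem cevian_comp_fixed [FiniteDimensional k V] (hV : Module.finrank k V = 2)
    (hABC : AffineIndependent k ![A, B, C]) (hα : α ≠ 0) (hβγ : β + γ ≠ 0)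
    (hTPA : (β + γ) • TP A = β • B + γ • C) (hTPB : (γ + α) • TP B = α • A + γ • C)
    (hTPC : (α + β) • TP C = α • A + β • B)
    (hTP'A : (β + γ) • TP' A = γ • B + β • C) (hTP'B : (γ + α) • TP' B = γ • A + α • C)
    (hTP'C : (α + β) • TP' C = β • A + α • B) {X : V} (hX : TP (TP' X) = X) :
    α ^ 2 * (β + γ) + β ^ 2 * (γ + α) + γ ^ 2 * (α + β) ≠ 0 ∧
      (α ^ 2 * (β + γ) + β ^ 2 * (γ + α) + γ ^ 2 * (α + β)) • X =
        (α ^ 2 * (β + γ)) • A + (β ^ 2 * (γ + α)) • B + (γ ^ 2 * (α + β)) • C := by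
  have h := cevian_comp_smul_apply hV hABC hTPA hTPB hTPC hTP'A hTP'B hTP'C X
  rw [hX, sub_smul, sub_add_eq_add_sub, eq_sub_iff_add_eq, add_left_cancel_iff] at h
  refine ⟨fun hN => ?_, h⟩
  rw [hN, zero_smul] at h
  exact mul_ne_zero (pow_ne_zero 2 hα) hβγ
    (hABC.eq_zero_of_smul_add_smul_add_smul_eq_zero hN h.symm)

theorem isotomic_cevian_smul_apply
    (hTP'A : (β + γ) • TP' A = γ • B + β • C) (hTP'B : (γ + α) • TP' B = γ • A + α • C)
    (hTP'C : (α + β) • TP' C = β • A + α • B) {X : V}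
    (hX : (α ^ 2 * (β + γ) + β ^ 2 * (γ + α) + γ ^ 2 * (α + β)) • X =
        (α ^ 2 * (β + γ)) • A + (β ^ 2 * (γ + α)) • B + (γ ^ 2 * (α + β)) • C) :
    (α ^ 2 * (β + γ) + β ^ 2 * (γ + α) + γ ^ 2 * (α + β)) • TP' X =
        (β * γ * (β + γ)) • A + (γ * α * (γ + α)) • B + (α * β * (α + β)) • C := by
  rw [TP'.smul_map_eq_of_smul_eq_smul_add_smul_add_smul hX]
  linear_combination (norm := module) α ^ 2 • hTP'A + β ^ 2 • hTP'B + γ ^ 2 • hTP'C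

end CevianComposite

theorem stmt7_general
    (A B C : Pt) (hABC : AffineIndependent ℝ ![A, B, C])
    (α β γ : ℝ) (hsum : α + β + γ = 1)
    (hα : α ≠ 0)
    (hβγ : β + γ ≠ 0) (hγα : γ + α ≠ 0) (hαβ : α + β ≠ 0)
    (hs : α * β + β * γ + γ * α ≠ 0)
    (G : Pt) (hG : G = (3:ℝ)⁻¹ • (A + B + C))
    (P : Pt) (hP : P = α • A + β • B + γ • C)
    (P' : Pt)
    (hP'' : P' = (α * β + β * γ + γ * α)⁻¹ • ((β * γ) • A + (γ * α) • B + (α * β) • C))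
    (D E F : Pt)
    (hD : D = (β + γ)⁻¹ • (β • B + γ • C))
    (hE : E = (γ + α)⁻¹ • (α • A + γ • C))
    (hF : F = (α + β)⁻¹ • (α • A + β • B))
    (D₃ E₃ F₃ : Pt)
    (hD₃ : D₃ = (β + γ)⁻¹ • (γ • B + β • C))
    (hE₃ : E₃ = (γ + α)⁻¹ • (γ • A + α • C))
    (hF₃ : F₃ = (α + β)⁻¹ • (β • A + α • B))
    (TP : Pt →ᵃ[ℝ] Pt) (hTPA : TP A = D) (hTPB : TP B = E) (hTPC : TP C = F)
    (TP' : Pt →ᵃ[ℝ] Pt) (hTP'A : TP' A = D₃) (hTP'B : TP' B = E₃) (hTP'C : TP' C = F₃)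
    (η : Pt →ᵃ[ℝ] Pt) (hηG : η G = G) (hηP : η P = P')

    (X : Pt) (hX : TP (TP' X) = X) :
    TP' (TP (η X)) = η X ∧ ∃ k : ℝ, η X - X = k • (P' - P) := by
  have hTP'A' := (eq_inv_smul_iff₀ hβγ).1 (hTP'A.trans hD₃)
  have hTP'B' := (eq_inv_smul_iff₀ hγα).1 (hTP'B.trans hE₃)
  have hTP'C' := (eq_inv_smul_iff₀ hαβ).1 (hTP'C.trans hF₃)
  obtain ⟨hN, hNX⟩ := cevian_comp_fixed finrank_euclideanSpace_fin hABC hα hβγ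
    ((eq_inv_smul_iff₀ hβγ).1 (hTPA.trans hD)) ((eq_inv_smul_iff₀ hγα).1 (hTPB.trans hE))
    ((eq_inv_smul_iff₀ hαβ).1 (hTPC.trans hF)) hTP'A' hTP'B' hTP'C' hX
  have hNT'X := isotomic_cevian_smul_apply hTP'A' hTP'B' hTP'C' hNX
  set N := α ^ 2 * (β + γ) + β ^ 2 * (γ + α) + γ ^ 2 * (α + β)
  set s := α * β + β * γ + γ * α
  have hXline : N • X = (N - s) • G + s • P := by
    rw [hNX, hG, hP]
    linear_combination (norm := module) hsum • (-(s / 3) • (A + B + C))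
  have hT'Xline : N • TP' X = (N - s) • G + s • P' := by
    rw [hNT'X, hG, hP'', smul_inv_smul₀ hs]
    linear_combination (norm := module)
      hsum • ((β * γ) • A + (γ * α) • B + (α * β) • C - (s / 3) • (A + B + C))
  have hηXline : N • η X = (N - s) • G + s • P' := by
    have h := η.smul_map_eq_of_smul_eq_smul_add_smul
      (show (N - s + s) • X = (N - s) • G + s • P by rwa [sub_add_cancel])
    rwa [sub_add_cancel, hηG, hηP] at h
  have hηX : η X = TP' X := smul_right_injective Pt hN (hηXline.trans hT'Xline.symm)
  refine ⟨by rw [hηX, hX], s / N, smul_right_injective Pt hN ?_⟩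
  simp only [smul_sub, hηXline, hXline, smul_smul, mul_div_cancel₀ _ hN]
  module

theorem stmt7
    (A B C : Pt) (hABC : AffineIndependent ℝ ![A, B, C])
    (α β γ : ℝ) (hsum : α + β + γ = 1)
    (hα : α ≠ 0) (hβ : β ≠ 0) (hγ : γ ≠ 0)
    (hβγ : β + γ ≠ 0) (hγα : γ + α ≠ 0) (hαβ : α + β ≠ 0)
    (hab : α ≠ β) (hbc : β ≠ γ) (hca : γ ≠ α)
    (hs : α * β + β * γ + γ * α ≠ 0)
    (G : Pt) (hG : G = (3:ℝ)⁻¹ • (A + B + C))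
    (P : Pt) (hP : P = α • A + β • B + γ • C)
    (P' : Pt)
    (hP'' : P' = (α * β + β * γ + γ * α)⁻¹ • ((β * γ) • A + (γ * α) • B + (α * β) • C))
    (Q : Pt) (hQ : Q = G - (2:ℝ)⁻¹ • (P' - G))
    (D E F : Pt)
    (hD : D = (β + γ)⁻¹ • (β • B + γ • C))
    (hE : E = (γ + α)⁻¹ • (α • A + γ • C))
    (hF : F = (α + β)⁻¹ • (α • A + β • B))
    (D₃ E₃ F₃ : Pt)
    (hD₃ : D₃ = (β + γ)⁻¹ • (γ • B + β • C))
    (hE₃ : E₃ = (γ + α)⁻¹ • (γ • A + α • C))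
    (hF₃ : F₃ = (α + β)⁻¹ • (β • A + α • B))
    (TP : Pt →ᵃ[ℝ] Pt) (hTPA : TP A = D) (hTPB : TP B = E) (hTPC : TP C = F)
    (TP' : Pt →ᵃ[ℝ] Pt) (hTP'A : TP' A = D₃) (hTP'B : TP' B = E₃) (hTP'C : TP' C = F₃)
    (V : Pt) (hV : V = (2:ℝ) • Q - P)
    (η : Pt →ᵃ[ℝ] Pt) (hηG : η G = G) (hηV : η V = V) (hηP : η P = P')

    (X : Pt) (hX : TP (TP' X) = X) :
    TP' (TP (η X)) = η X ∧ ∃ k : ℝ, η X - X = k • (P' - P) :=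
  stmt7_general A B C hABC α β γ hsum hα hβγ hγα hαβ hs G hG P hP P' hP'' D E F hD hE hF D₃ E₃ F₃
    hD₃ hE₃ hF₃ TP hTPA hTPB hTPC TP' hTP'A hTP'B hTP'C η hηG hηP X hX
end
end

section
/- The triangles A₃B₃C₃ = (T_P(D₃), T_P(E₃), T_P(F₃)) and A₃'B₃'C₃' = (T_{P'}(D), T_{P'}(E), T_{P'}(F)) are translates of one another, hence congruent: T_{P'}(D) − T_P(D₃) = T_{P'}(E) − T_P(E₃) = T_{P'}(F) − T_P(F₃). -/
/-! Affine maps preserve affine combinations, so `T_{P'}(D)` and `T_P(D₃)` are the weighted means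
of the images of `B` and `C`, with the weights `β, γ` of `D` and the swapped weights of `D₃`.
Expanding, `T_{P'}(D) - T_P(D₃)` equals
`τ = ∑ (βγ - α²) / ((α + β)(α + γ)) • A` (summed cyclically over the vertices), and this
vector is invariant under the cyclic relabelling that carries `D` to `E` and `F`. -/

noncomputable section

section

variable {k V W : Type*} [Field k] [AddCommGroup V] [Module k V] [AddCommGroup W] [Module k W]

theorem AffineMap.map_inv_smul_add_smul (T : V →ᵃ[k] W) {a b s : k} (hab : a + b = s)
    (hs : s ≠ 0) (x y : V) : T (s⁻¹ • (a • x + b • y)) = s⁻¹ • (a • T x + b • T y) := by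
  have hsum : s⁻¹ * a + s⁻¹ * b = 1 := by rw [← mul_add, hab, inv_mul_cancel₀ hs]
  simp only [smul_add, smul_smul]
  exact Convex.combo_affine_apply hsum

theorem AffineMap.map_inv_smul_add_smul_sub_map_inv_smul_add_smul (T T' : V →ᵃ[k] W) {a b s : k}
    (hab : a + b = s) (hs : s ≠ 0) (x y : V) :
    T' (s⁻¹ • (a • x + b • y)) - T (s⁻¹ • (b • x + a • y)) =
      s⁻¹ • (a • T' x + b • T' y - (b • T x + a • T y)) := by
  rw [T'.map_inv_smul_add_smul hab hs, T.map_inv_smul_add_smul ((add_comm b a).trans hab) hs,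
    smul_sub]

end

theorem stmt9_general
    (A B C : Pt)
    (α β γ : ℝ)
    (hβγ : β + γ ≠ 0) (hγα : γ + α ≠ 0) (hαβ : α + β ≠ 0)
    (D E F : Pt)
    (hD : D = (β + γ)⁻¹ • (β • B + γ • C))
    (hE : E = (γ + α)⁻¹ • (α • A + γ • C))
    (hF : F = (α + β)⁻¹ • (α • A + β • B))
    (D₃ E₃ F₃ : Pt)
    (hD₃ : D₃ = (β + γ)⁻¹ • (γ • B + β • C))
    (hE₃ : E₃ = (γ + α)⁻¹ • (γ • A + α • C))
    (hF₃ : F₃ = (α + β)⁻¹ • (β • A + α • B))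
    (TP : Pt →ᵃ[ℝ] Pt) (hTPA : TP A = D) (hTPB : TP B = E) (hTPC : TP C = F)
    (TP' : Pt →ᵃ[ℝ] Pt) (hTP'A : TP' A = D₃) (hTP'B : TP' B = E₃) (hTP'C : TP' C = F₃)
    :
    TP' D - TP D₃ = TP' E - TP E₃ ∧ TP' E - TP E₃ = TP' F - TP F₃ := by
  set τ : Pt := ((β * γ - α ^ 2) / ((α + β) * (γ + α))) • A
    + ((γ * α - β ^ 2) / ((α + β) * (β + γ))) • B
    + ((α * β - γ ^ 2) / ((β + γ) * (γ + α))) • C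
  have hτD : TP' D - TP D₃ = τ := by
    rw [hD, hD₃, AffineMap.map_inv_smul_add_smul_sub_map_inv_smul_add_smul TP TP' rfl hβγ,
      hTP'B, hTP'C, hTPB, hTPC, hE, hF, hE₃, hF₃]
    match_scalars <;> field_simp <;> ring
  have hτE : TP' E - TP E₃ = τ := by
    rw [hE, hE₃,
      AffineMap.map_inv_smul_add_smul_sub_map_inv_smul_add_smul TP TP' (add_comm α γ) hγα,
      hTP'A, hTP'C, hTPA, hTPC, hD, hF, hD₃, hF₃]
    match_scalars <;> field_simp <;> ring
  have hτF : TP' F - TP F₃ = τ := by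
    rw [hF, hF₃, AffineMap.map_inv_smul_add_smul_sub_map_inv_smul_add_smul TP TP' rfl hαβ,
      hTP'A, hTP'B, hTPA, hTPB, hD, hE, hD₃, hE₃]
    match_scalars <;> field_simp <;> ring
  exact ⟨hτD.trans hτE.symm, hτE.trans hτF.symm⟩

theorem stmt9
    (A B C : Pt) (hABC : AffineIndependent ℝ ![A, B, C])
    (α β γ : ℝ) (hsum : α + β + γ = 1)
    (hα : α ≠ 0) (hβ : β ≠ 0) (hγ : γ ≠ 0)
    (hβγ : β + γ ≠ 0) (hγα : γ + α ≠ 0) (hαβ : α + β ≠ 0)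
    (hs : α * β + β * γ + γ * α ≠ 0)
    (P : Pt) (hP : P = α • A + β • B + γ • C)
    (P' : Pt)
    (hP'' : P' = (α * β + β * γ + γ * α)⁻¹ • ((β * γ) • A + (γ * α) • B + (α * β) • C))
    (D E F : Pt)
    (hD : D = (β + γ)⁻¹ • (β • B + γ • C))
    (hE : E = (γ + α)⁻¹ • (α • A + γ • C))
    (hF : F = (α + β)⁻¹ • (α • A + β • B))
    (D₃ E₃ F₃ : Pt)
    (hD₃ : D₃ = (β + γ)⁻¹ • (γ • B + β • C))
    (hE₃ : E₃ = (γ + α)⁻¹ • (γ • A + α • C))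
    (hF₃ : F₃ = (α + β)⁻¹ • (β • A + α • B))
    (TP : Pt →ᵃ[ℝ] Pt) (hTPA : TP A = D) (hTPB : TP B = E) (hTPC : TP C = F)
    (TP' : Pt →ᵃ[ℝ] Pt) (hTP'A : TP' A = D₃) (hTP'B : TP' B = E₃) (hTP'C : TP' C = F₃)
    :
    TP' D - TP D₃ = TP' E - TP E₃ ∧ TP' E - TP E₃ = TP' F - TP F₃ :=
  stmt9_general A B C α β γ hβγ hγα hαβ D E F hD hE hF D₃ E₃ F₃ hD₃ hE₃ hF₃ TP hTPA hTPB hTPC TP'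
    hTP'A hTP'B hTP'C
end
end

section
/- Assume additionally α ≠ −1. Then the harmonic conjugate A₄ := (2α·A + β·B + γ·C)/(1+α) of D with respect to the pair (A, P) — which lies on line AP, with D = A + (1/(1−α))(P−A), A₄ = A + (1/(1+α))(P−A), so that the parameters t = 1/(1−α), u = 1/(1+α) satisfy the harmonic relation t + u = 2tu — lies on the line EF. In other words, the points A, A₄, P, D form a harmonic set, where A₄ is the intersection of line AP with line EF. -/
noncomputable section

theorem stmt11
    (A B C : Pt) (hABC : AffineIndependent ℝ ![A, B, C])
    (α β γ : ℝ) (hsum : α + β + γ = 1)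
    (hα : α ≠ 0) (hβ : β ≠ 0) (hγ : γ ≠ 0)
    (hβγ : β + γ ≠ 0) (hγα : γ + α ≠ 0) (hαβ : α + β ≠ 0)
    (P : Pt) (hP : P = α • A + β • B + γ • C)
    (D E F : Pt)
    (hD : D = (β + γ)⁻¹ • (β • B + γ • C))
    (hE : E = (γ + α)⁻¹ • (α • A + γ • C))
    (hF : F = (α + β)⁻¹ • (α • A + β • B))

    (hα1 : α ≠ -1)
    (A₄ : Pt) (hA₄ : A₄ = (1 + α)⁻¹ • ((2 * α) • A + β • B + γ • C)) :
    A₄ = A + (1 + α)⁻¹ • (P - A) ∧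
    D = A + (1 - α)⁻¹ • (P - A) ∧
    Collinear ℝ ({A₄, E, F} : Set Pt) := by
  have h1 : (1 : ℝ) + α ≠ 0 := fun h => hα1 (by linarith)
  have h2 : (1 : ℝ) - α ≠ 0 := by
    rw [show (1:ℝ) - α = β + γ by linarith]; exact hβγ
  have hγ' : γ = 1 - α - β := by linarith
  subst hγ'
  refine ⟨?_, ?_, ?_⟩
  · subst hA₄ hP
    match_scalars <;> field_simp <;> ring
  · subst hD hP
    match_scalars <;> field_simp <;> ring
  · have key : A₄ = ((α + β) / (1 + α)) • (F -ᵥ E) +ᵥ E := by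
      simp only [vsub_eq_sub, vadd_eq_add]
      subst hA₄ hE hF
      match_scalars <;> field_simp <;> ring
    rw [key]
    exact collinear_insert_of_mem_affineSpan_pair
      (smul_vsub_vadd_mem_affineSpan_pair _ E F)
end
end

section
/- There exists a quadratic polynomial on ℝ² with nonzero coefficient vector that vanishes at the eight points T_{P'}⁻¹(A), T_{P'}⁻¹(B), T_{P'}⁻¹(C) (the vertices of the anticevian triangle of Q), T_P⁻¹(A), T_P⁻¹(B), T_P⁻¹(C) (the vertices of the anticevian triangle of Q'), Q, and Q'. (This conic is T_P⁻¹(𝒞_P) = T_{P'}⁻¹(𝒞_P).) -/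
/-!
In homogeneous barycentric coordinates with respect to `ABC`, the inverse of the map sending `ABC`
to the cevian triangle of `(x : y : z)` sends `A, B, C` to `(-u : v : w)`, `(u : -v : w)`,
`(u : v : -w)`, where `(u : v : w) = (y + z : z + x : x + y)` is the complement of `(x : y : z)`.
The complement of `P = (α : β : γ)` is `Q' = (β + γ : γ + α : α + β)`, that of
`P' = (βγ : γα : αβ)` is `Q = (α(β + γ) : β(γ + α) : γ(α + β))`. A diagonal conic
`p u² + q v² + r w² = 0` contains every sign change of each of its points, so it only has to pass
through `Q` and `Q'`; the conic `∑ (β - γ)(γ + α)(α + β) u² = 0` does. Barycentric coordinates are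
affine functions of the Cartesian ones, so this is a Cartesian quadratic, and it is nonzero since
its value at `A` is `(β - γ)(γ + α)(α + β) ≠ 0`.
-/

noncomputable section

theorem AffineMap.map_smul_add_smul_add_smul_s13 {k V₁ V₂ : Type*} [CommRing k]
    [AddCommGroup V₁] [Module k V₁] [AddCommGroup V₂] [Module k V₂]
    (f : V₁ →ᵃ[k] V₂) (A B C : V₁) {u v w : k} (h : u + v + w = 1) :
    f (u • A + v • B + w • C) = u • f A + v • f B + w • f C := by
  obtain rfl : u = 1 - v - w := by rw [← h]; abel
  have hf : ∀ X, f X = f.linear (X - A) + f A := fun X => by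
    rw [← vsub_eq_sub, f.linearMap_vsub, vsub_eq_sub, sub_add_cancel]
  have hX : (1 - v - w) • A + v • B + w • C - A = v • (B - A) + w • (C - A) := by module
  rw [hf ((1 - v - w) • A + v • B + w • C), hf B, hf C, hX, map_add, map_smul, map_smul]
  module

/-- The point with homogeneous barycentric coordinates `(u : v : w)`; it is `0` when
`u + v + w = 0`. -/
def baryPoint {V : Type*} [AddCommGroup V] [Module ℝ V] (A B C : V) (u v w : ℝ) : V :=
  (u + v + w)⁻¹ • (u • A + v • B + w • C)

section Barycentric

variable {V : Type*} [AddCommGroup V] [Module ℝ V] {A B C : V}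

theorem AffineMap.map_baryPoint {V₂ : Type*} [AddCommGroup V₂] [Module ℝ V₂]
    (f : V →ᵃ[ℝ] V₂) {u v w : ℝ} (h : u + v + w ≠ 0) :
    f (baryPoint A B C u v w) = baryPoint (f A) (f B) (f C) u v w := by
  have hsum : (u + v + w)⁻¹ * u + (u + v + w)⁻¹ * v + (u + v + w)⁻¹ * w = 1 := by
    field_simp
  simp only [baryPoint, smul_add, smul_smul]
  rw [f.map_smul_add_smul_add_smul_s13 A B C hsum]

theorem inv_smul_add_smul_eq_of_mul_eq {X Y : V} {s v w s' v' w' : ℝ} (hs : s ≠ 0) (hs' : s' ≠ 0)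
    (hsum : s = v + w) (hsum' : s' = v' + w') (hvw : v * w' = v' * w) :
    s⁻¹ • (v • X + w • Y) = s'⁻¹ • (v' • X + w' • Y) := by
  simp only [smul_add, smul_smul]
  congr 2 <;> rw [inv_mul_eq_div, inv_mul_eq_div, div_eq_div_iff hs hs', hsum, hsum']
  · linear_combination hvw
  · linear_combination -hvw

theorem baryPoint_complement {x y z : ℝ} (h : x + y + z ≠ 0) :
    baryPoint A B C (y + z) (z + x) (x + y) =
      (3 : ℝ)⁻¹ • (A + B + C) - (2 : ℝ)⁻¹ • (baryPoint A B C x y z - (3 : ℝ)⁻¹ • (A + B + C)) := by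
  rw [baryPoint, baryPoint, show y + z + (z + x) + (x + y) = 2 * (x + y + z) by ring]
  match_scalars <;> field_simp <;> ring

theorem AffineEquiv.symm_cevian_eq_anticevian (T : V ≃ᵃ[ℝ] V) {x y z : ℝ}
    (hx : x ≠ 0) (hy : y ≠ 0) (hz : z ≠ 0) (hyz : y + z ≠ 0) (hzx : z + x ≠ 0) (hxy : x + y ≠ 0)
    (hTA : T A = (y + z)⁻¹ • (y • B + z • C)) (hTB : T B = (z + x)⁻¹ • (x • A + z • C))
    (hTC : T C = (x + y)⁻¹ • (x • A + y • B)) :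
    T.symm A = baryPoint A B C (-(y + z)) (z + x) (x + y) ∧
      T.symm B = baryPoint A B C (y + z) (-(z + x)) (x + y) ∧
      T.symm C = baryPoint A B C (y + z) (z + x) (-(x + y)) := by
  have symm_eq : ∀ X u v w, u + v + w ≠ 0 → baryPoint (T A) (T B) (T C) u v w = X →
      T.symm X = baryPoint A B C u v w := fun X u v w h hX => by
    rw [T.symm_apply_eq, ← hX]
    exact (T.toAffineMap.map_baryPoint h).symm
  rw [hTA, hTB, hTC] at symm_eq
  have hA : -(y + z) + (z + x) + (x + y) = 2 * x := by ring
  have hB : y + z + -(z + x) + (x + y) = 2 * y := by ring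
  have hC : y + z + (z + x) + -(x + y) = 2 * z := by ring
  have hxz : x + z ≠ 0 := by rwa [add_comm]
  refine ⟨symm_eq _ _ _ _ (by rw [hA]; positivity) ?_, symm_eq _ _ _ _ (by rw [hB]; positivity) ?_,
    symm_eq _ _ _ _ (by rw [hC]; positivity) ?_⟩ <;>
  · simp only [baryPoint, hA, hB, hC]
    match_scalars <;> field_simp <;> ring

end Barycentric

def quadraticFunctions : Submodule ℝ (Pt → ℝ) where
  carrier := {g | ∃ a b c d e f : ℝ, g = qeval a b c d e f}
  add_mem' := by
    rintro _ _ ⟨a, b, c, d, e, f, rfl⟩ ⟨a', b', c', d', e', f', rfl⟩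
    exact ⟨a + a', b + b', c + c', d + d', e + e', f + f', by
      funext W; simp only [Pi.add_apply, qeval]; ring⟩
  zero_mem' := ⟨0, 0, 0, 0, 0, 0, by funext W; simp [qeval]⟩
  smul_mem' := by
    rintro t _ ⟨a, b, c, d, e, f, rfl⟩
    exact ⟨t * a, t * b, t * c, t * d, t * e, t * f, by
      funext W; simp only [Pi.smul_apply, smul_eq_mul, qeval]; ring⟩

theorem sq_affineMap_mem_quadraticFunctions (L : Pt →ᵃ[ℝ] ℝ) :
    (fun W => L W ^ 2) ∈ quadraticFunctions := by
  set l₀ := L.linear (EuclideanSpace.single 0 1)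
  set l₁ := L.linear (EuclideanSpace.single 1 1)
  have hL : ∀ W : Pt, L W = W 0 * l₀ + W 1 * l₁ + L 0 := fun W => by
    have hW : W = W 0 • EuclideanSpace.single 0 1 + W 1 • EuclideanSpace.single 1 1 := by
      ext i; fin_cases i <;> simp
    rw [congrFun L.decomp W, Pi.add_apply, hW]
    simp [l₀, l₁]
  exact ⟨l₀ ^ 2, 2 * l₀ * l₁, l₁ ^ 2, 2 * l₀ * L 0, 2 * l₁ * L 0, L 0 ^ 2, by
    funext W; simp only [qeval, hL W]; ring⟩

theorem exists_qeval_baryPoint_eq {A B C : Pt} (hABC : AffineIndependent ℝ ![A, B, C])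
    (p q r : ℝ) :
    ∃ a b c d e f : ℝ, ∀ u v w : ℝ, u + v + w ≠ 0 →
      qeval a b c d e f (baryPoint A B C u v w) =
        (p * u ^ 2 + q * v ^ 2 + r * w ^ 2) / (u + v + w) ^ 2 := by
  have hspan : affineSpan ℝ (Set.range ![A, B, C]) = ⊤ := by
    rw [hABC.affineSpan_eq_top_iff_card_eq_finrank_add_one]
    simp
  let bary : AffineBasis (Fin 3) ℝ Pt := ⟨![A, B, C], hABC, hspan⟩
  have mem := quadraticFunctions.add_mem (quadraticFunctions.add_mem
    (quadraticFunctions.smul_mem p (sq_affineMap_mem_quadraticFunctions (bary.coord 0)))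
    (quadraticFunctions.smul_mem q (sq_affineMap_mem_quadraticFunctions (bary.coord 1))))
    (quadraticFunctions.smul_mem r (sq_affineMap_mem_quadraticFunctions (bary.coord 2)))
  obtain ⟨a, b, c, d, e, f, hq⟩ := mem
  refine ⟨a, b, c, d, e, f, fun u v w h => ?_⟩
  have hA : ∀ i, bary.coord i A = if i = 0 then 1 else 0 := fun i => bary.coord_apply i 0
  have hB : ∀ i, bary.coord i B = if i = 1 then 1 else 0 := fun i => bary.coord_apply i 1
  have hC : ∀ i, bary.coord i C = if i = 2 then 1 else 0 := fun i => bary.coord_apply i 2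
  rw [← hq]
  simp only [Pi.add_apply, Pi.smul_apply, smul_eq_mul, (bary.coord _).map_baryPoint h, hA, hB, hC]
  simp only [baryPoint, ↓reduceIte, smul_eq_mul, mul_one, Fin.isValue, zero_ne_one, mul_zero,
    add_zero, Fin.reduceEq, one_ne_zero, zero_add]
  field_simp

theorem qeval_anticevian_complement_eq_zero {A B C : Pt} {a b c d e f p q r : ℝ}
    (hconic : ∀ u v w : ℝ, u + v + w ≠ 0 → qeval a b c d e f (baryPoint A B C u v w) =
      (p * u ^ 2 + q * v ^ 2 + r * w ^ 2) / (u + v + w) ^ 2)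
    (T : Pt ≃ᵃ[ℝ] Pt) {x y z : ℝ} (hx : x ≠ 0) (hy : y ≠ 0) (hz : z ≠ 0)
    (hyz : y + z ≠ 0) (hzx : z + x ≠ 0) (hxy : x + y ≠ 0) (hxyz : x + y + z ≠ 0)
    (hTA : T A = (y + z)⁻¹ • (y • B + z • C)) (hTB : T B = (z + x)⁻¹ • (x • A + z • C))
    (hTC : T C = (x + y)⁻¹ • (x • A + y • B))
    (hpqr : p * (y + z) ^ 2 + q * (z + x) ^ 2 + r * (x + y) ^ 2 = 0) :
    qeval a b c d e f (T.symm A) = 0 ∧ qeval a b c d e f (T.symm B) = 0 ∧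
      qeval a b c d e f (T.symm C) = 0 ∧
      qeval a b c d e f (baryPoint A B C (y + z) (z + x) (x + y)) = 0 := by
  have on_conic : ∀ u v w, u + v + w ≠ 0 → u ^ 2 = (y + z) ^ 2 → v ^ 2 = (z + x) ^ 2 →
      w ^ 2 = (x + y) ^ 2 → qeval a b c d e f (baryPoint A B C u v w) = 0 := by
    intro u v w h hu hv hw
    rw [hconic u v w h, hu, hv, hw, hpqr, zero_div]
  obtain ⟨hA, hB, hC⟩ := T.symm_cevian_eq_anticevian hx hy hz hyz hzx hxy hTA hTB hTC
  rw [hA, hB, hC]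
  exact ⟨on_conic _ _ _ (fun h => hx (by linarith)) (neg_sq _) rfl rfl,
    on_conic _ _ _ (fun h => hy (by linarith)) rfl (neg_sq _) rfl,
    on_conic _ _ _ (fun h => hz (by linarith)) rfl rfl (neg_sq _),
    on_conic _ _ _ (fun h => hxyz (by linarith)) rfl rfl rfl⟩

theorem stmt13_general
    (A B C : Pt) (hABC : AffineIndependent ℝ ![A, B, C])
    (α β γ : ℝ) (hsum : α + β + γ = 1)
    (hα : α ≠ 0) (hβ : β ≠ 0) (hγ : γ ≠ 0)
    (hβγ : β + γ ≠ 0) (hγα : γ + α ≠ 0) (hαβ : α + β ≠ 0)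
    (hbc : β ≠ γ)
    (hs : α * β + β * γ + γ * α ≠ 0)
    (G : Pt) (hG : G = (3:ℝ)⁻¹ • (A + B + C))
    (P : Pt) (hP : P = α • A + β • B + γ • C)
    (P' : Pt)
    (hP'' : P' = (α * β + β * γ + γ * α)⁻¹ • ((β * γ) • A + (γ * α) • B + (α * β) • C))
    (Q : Pt) (hQ : Q = G - (2:ℝ)⁻¹ • (P' - G))
    (Q' : Pt) (hQ' : Q' = G - (2:ℝ)⁻¹ • (P - G))
    (D E F : Pt)
    (hD : D = (β + γ)⁻¹ • (β • B + γ • C))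
    (hE : E = (γ + α)⁻¹ • (α • A + γ • C))
    (hF : F = (α + β)⁻¹ • (α • A + β • B))
    (D₃ E₃ F₃ : Pt)
    (hD₃ : D₃ = (β + γ)⁻¹ • (γ • B + β • C))
    (hE₃ : E₃ = (γ + α)⁻¹ • (γ • A + α • C))
    (hF₃ : F₃ = (α + β)⁻¹ • (β • A + α • B))
    (TP : Pt ≃ᵃ[ℝ] Pt) (hTPA : TP A = D) (hTPB : TP B = E) (hTPC : TP C = F)
    (TP' : Pt ≃ᵃ[ℝ] Pt) (hTP'A : TP' A = D₃) (hTP'B : TP' B = E₃) (hTP'C : TP' C = F₃)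
    :
    ∃ a b c d e f : ℝ, (a, b, c, d, e, f) ≠ (0, 0, 0, 0, 0, 0) ∧
      qeval a b c d e f (TP'.symm A) = 0 ∧ qeval a b c d e f (TP'.symm B) = 0 ∧
      qeval a b c d e f (TP'.symm C) = 0 ∧ qeval a b c d e f (TP.symm A) = 0 ∧
      qeval a b c d e f (TP.symm B) = 0 ∧ qeval a b c d e f (TP.symm C) = 0 ∧
      qeval a b c d e f Q = 0 ∧ qeval a b c d e f Q' = 0 := by
  have hp : (β - γ) * (γ + α) * (α + β) ≠ 0 :=
    mul_ne_zero (mul_ne_zero (sub_ne_zero.mpr hbc) hγα) hαβ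
  obtain ⟨a, b, c, d, e, f, hconic⟩ := exists_qeval_baryPoint_eq hABC
    ((β - γ) * (γ + α) * (α + β)) ((γ - α) * (α + β) * (β + γ)) ((α - β) * (β + γ) * (γ + α))
  obtain ⟨hPA, hPB, hPC, hPc⟩ := qeval_anticevian_complement_eq_zero hconic TP
    hα hβ hγ hβγ hγα hαβ (by rw [hsum]; exact one_ne_zero)
    (hTPA.trans hD) (hTPB.trans hE) (hTPC.trans hF) (by ring)
  have hyz : γ * α + α * β ≠ 0 := by convert mul_ne_zero hα hβγ using 1; ring
  have hzx : α * β + β * γ ≠ 0 := by convert mul_ne_zero hβ hγα using 1; ring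
  have hxy : β * γ + γ * α ≠ 0 := by convert mul_ne_zero hγ hαβ using 1; ring
  obtain ⟨hP'A, hP'B, hP'C, hP'c⟩ := qeval_anticevian_complement_eq_zero hconic TP'
    (mul_ne_zero hβ hγ) (mul_ne_zero hγ hα) (mul_ne_zero hα hβ) hyz hzx hxy
    (by convert hs using 1; ring)
    (hTP'A.trans <| hD₃.trans <|
      inv_smul_add_smul_eq_of_mul_eq hβγ hyz (by ring) (by ring) (by ring))
    (hTP'B.trans <| hE₃.trans <|
      inv_smul_add_smul_eq_of_mul_eq hγα hzx (by ring) (by ring) (by ring))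
    (hTP'C.trans <| hF₃.trans <|
      inv_smul_add_smul_eq_of_mul_eq hαβ hxy (by ring) (by ring) (by ring))
    (by ring)
  have hQ'c : Q' = baryPoint A B C (β + γ) (γ + α) (α + β) := by
    rw [baryPoint_complement (by rw [hsum]; exact one_ne_zero), hQ', hG, hP, baryPoint, hsum,
      inv_one, one_smul]
  have hQc : Q = baryPoint A B C (γ * α + α * β) (α * β + β * γ) (β * γ + γ * α) := by
    rw [baryPoint_complement (by convert hs using 1; ring), hQ, hG, hP'', baryPoint]
    congr 4
    ring
  refine ⟨a, b, c, d, e, f, ?_, hP'A, hP'B, hP'C, hPA, hPB, hPC, hQc ▸ hP'c, hQ'c ▸ hPc⟩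
  intro h0
  simp only [Prod.mk.injEq] at h0
  obtain ⟨rfl, rfl, rfl, rfl, rfl, rfl⟩ := h0
  have hconicA := hconic 1 0 0 (by norm_num)
  exact hp (by simpa [qeval] using hconicA.symm)

theorem stmt13
    (A B C : Pt) (hABC : AffineIndependent ℝ ![A, B, C])
    (α β γ : ℝ) (hsum : α + β + γ = 1)
    (hα : α ≠ 0) (hβ : β ≠ 0) (hγ : γ ≠ 0)
    (hβγ : β + γ ≠ 0) (hγα : γ + α ≠ 0) (hαβ : α + β ≠ 0)
    (hab : α ≠ β) (hbc : β ≠ γ) (hca : γ ≠ α)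
    (hs : α * β + β * γ + γ * α ≠ 0)
    (G : Pt) (hG : G = (3:ℝ)⁻¹ • (A + B + C))
    (P : Pt) (hP : P = α • A + β • B + γ • C)
    (P' : Pt)
    (hP'' : P' = (α * β + β * γ + γ * α)⁻¹ • ((β * γ) • A + (γ * α) • B + (α * β) • C))
    (Q : Pt) (hQ : Q = G - (2:ℝ)⁻¹ • (P' - G))
    (Q' : Pt) (hQ' : Q' = G - (2:ℝ)⁻¹ • (P - G))
    (D E F : Pt)
    (hD : D = (β + γ)⁻¹ • (β • B + γ • C))
    (hE : E = (γ + α)⁻¹ • (α • A + γ • C))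
    (hF : F = (α + β)⁻¹ • (α • A + β • B))
    (D₃ E₃ F₃ : Pt)
    (hD₃ : D₃ = (β + γ)⁻¹ • (γ • B + β • C))
    (hE₃ : E₃ = (γ + α)⁻¹ • (γ • A + α • C))
    (hF₃ : F₃ = (α + β)⁻¹ • (β • A + α • B))
    (TP : Pt ≃ᵃ[ℝ] Pt) (hTPA : TP A = D) (hTPB : TP B = E) (hTPC : TP C = F)
    (TP' : Pt ≃ᵃ[ℝ] Pt) (hTP'A : TP' A = D₃) (hTP'B : TP' B = E₃) (hTP'C : TP' C = F₃)
    :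
    ∃ a b c d e f : ℝ, (a, b, c, d, e, f) ≠ (0, 0, 0, 0, 0, 0) ∧
      qeval a b c d e f (TP'.symm A) = 0 ∧ qeval a b c d e f (TP'.symm B) = 0 ∧
      qeval a b c d e f (TP'.symm C) = 0 ∧ qeval a b c d e f (TP.symm A) = 0 ∧
      qeval a b c d e f (TP.symm B) = 0 ∧ qeval a b c d e f (TP.symm C) = 0 ∧
      qeval a b c d e f Q = 0 ∧ qeval a b c d e f Q' = 0 :=
  stmt13_general A B C hABC α β γ hsum hα hβ hγ hβγ hγα hαβ hbc hs G hG P hP P' hP'' Q hQ Q' hQ' D E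
    F hD hE hF D₃ E₃ F₃ hD₃ hE₃ hF₃ TP hTPA hTPB hTPC TP' hTP'A hTP'B hTP'C
end
end

section
/- A point R ∈ ℝ² is a fixed point of the affine map λ = T_{P'} ∘ T_P⁻¹, i.e. T_{P'}(T_P⁻¹(R)) = R, if and only if R lies both on the line through G and V and on the line through T_P(G) and T_P(V). (Hence λ has at most one fixed point in ℝ², namely Z = GV · T_P(GV) when the two lines meet.) -/
noncomputable section

/-!
In barycentric coordinates with respect to `A, B, C`, the maps `T_P` and `T_{P'}` act on
coordinate rows as right multiplication by the matrices `M_P`, `M_{P'}` whose rows are the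
coordinates of `D, E, F` and of `D₃, E₃, F₃`, and three points are collinear iff the determinant
of their coordinate rows vanishes. Let `x` be the coordinates of `X = T_P⁻¹ R`. The line `GV` is
`{y | y ⬝ N = 0}` for an explicit `N`, so `R ∈ GV` and `R ∈ T_P(GV)` read `x ⬝ M_P N = 0` and
`x ⬝ N = 0`, i.e. `x ∥ N × M_P N`; a direct computation shows that `N × M_P N` is a nonzero
multiple of `W = (β-γ)(γ-α)(α-β) · ((β+γ)/(β-γ), (γ+α)/(γ-α), (α+β)/(α-β))`. On the other hand
`R` is fixed by `T_{P'} ∘ T_P⁻¹` iff `x (M_P - M_{P'}) = 0`, that is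
`(β-γ)/(β+γ) x₀ = (γ-α)/(γ+α) x₁ = (α-β)/(α+β) x₂`, which is again `x ∥ W`.
-/

open Matrix

section Barycentric

variable {k V : Type*} [Field k] [AddCommGroup V] [Module k V] {T : Fin 3 → V}

theorem AffineEquiv.collinear_map_iff {V₂ : Type*} [AddCommGroup V₂] [Module k V₂]
    (e : V ≃ᵃ[k] V₂) {a b c : V} : Collinear k {e a, e b, e c} ↔ Collinear k {a, b, c} := by
  have h : ![e a, e b, e c] = e ∘ ![a, b, c] := by funext i; fin_cases i <;> rfl
  rw [collinear_iff_not_affineIndependent_set, collinear_iff_not_affineIndependent_set, h,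
    e.affineIndependent_iff]

theorem AffineIndependent.exists_barycentric_eq [FiniteDimensional k V]
    (hT : AffineIndependent k T) (hV : Module.finrank k V = 2) (X : V) :
    ∃ x : Fin 3 → k, ∑ i, x i = 1 ∧ X = ∑ i, x i • T i := by
  have hspan : affineSpan k (Set.range T) = ⊤ := by
    rw [hT.affineSpan_eq_top_iff_card_eq_finrank_add_one, hV, Fintype.card_fin]
  let b : AffineBasis (Fin 3) k V := ⟨T, hT, hspan⟩
  exact ⟨fun i => b.coord i X, b.sum_coord_apply_eq_one X,
    (b.linear_combination_coord_eq_self X).symm⟩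

theorem AffineIndependent.sum_smul_eq_sum_smul_iff (hT : AffineIndependent k T)
    {u w : Fin 3 → k} (huw : ∑ i, u i = ∑ i, w i) :
    ∑ i, u i • T i = ∑ i, w i • T i ↔ u = w :=
  ⟨fun h => funext fun i => hT.eq_of_sum_eq_sum huw h i (Finset.mem_univ i), fun h => h ▸ rfl⟩

theorem sum_vecMul_of_sum_row_eq_one {M : Matrix (Fin 3) (Fin 3) k}
    (hM : ∀ i, ∑ j, M i j = 1) (x : Fin 3 → k) : ∑ j, (x ᵥ* M) j = ∑ i, x i := by
  simp only [vecMul, dotProduct]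
  rw [Finset.sum_comm]
  simp only [← Finset.mul_sum, hM, mul_one]

theorem sum_smul_sum_smul_eq_sum_vecMul_smul (x : Fin 3 → k) (M : Matrix (Fin 3) (Fin 3) k) :
    ∑ i, x i • ∑ j, M i j • T j = ∑ j, (x ᵥ* M) j • T j := by
  simp only [Finset.smul_sum, smul_smul, vecMul, dotProduct, Finset.sum_smul]
  exact Finset.sum_comm

theorem AffineMap.map_sum_smul_eq_sum_vecMul_smul {V₂ : Type*} [AddCommGroup V₂] [Module k V₂]
    (f : V →ᵃ[k] V₂) {S : Fin 3 → V₂} {M : Matrix (Fin 3) (Fin 3) k}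
    (hf : ∀ i, f (T i) = ∑ j, M i j • S j) {x : Fin 3 → k} (hx : ∑ i, x i = 1) :
    f (∑ i, x i • T i) = ∑ j, (x ᵥ* M) j • S j := by
  rw [← Finset.univ.affineCombination_eq_linear_combination _ _ hx,
    Finset.univ.map_affineCombination _ _ hx,
    Finset.univ.affineCombination_eq_linear_combination _ _ hx]
  simp only [Function.comp_apply, hf]
  exact sum_smul_sum_smul_eq_sum_vecMul_smul x M

theorem AffineIndependent.collinear_iff_det_eq_zero (hT : AffineIndependent k T)
    {u v w : Fin 3 → k} (hu : ∑ i, u i = 1) (hv : ∑ i, v i = 1) (hw : ∑ i, w i = 1) :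
    Collinear k {∑ i, u i • T i, ∑ i, v i • T i, ∑ i, w i • T i} ↔ det ![u, v, w] = 0 := by
  set M : Matrix (Fin 3) (Fin 3) k := ![u, v, w]
  have hM : ∀ i, ∑ j, M i j = 1 := by
    intro i; fin_cases i <;> assumption
  have hp : ![∑ i, u i • T i, ∑ i, v i • T i, ∑ i, w i • T i] = fun i => ∑ j, M i j • T j := by
    funext i; fin_cases i <;> rfl
  have hcomb (c : Fin 3 → k) : ∑ i, c i • (∑ j, M i j • T j) = ∑ j, (c ᵥ* M) j • T j :=
    sum_smul_sum_smul_eq_sum_vecMul_smul c M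
  rw [collinear_iff_not_affineIndependent_set, hp, affineIndependent_iff_of_fintype,
    ← exists_vecMul_eq_zero_iff]
  push Not
  constructor
  · rintro ⟨c, hc0, hc, i, hi⟩
    rw [Finset.univ.weightedVSub_eq_linear_combination hc0, hcomb] at hc
    refine ⟨c, fun h => hi (by simp [h]), funext fun j => ?_⟩
    refine hT.eq_zero_of_sum_eq_zero ?_ hc j (Finset.mem_univ j)
    rw [sum_vecMul_of_sum_row_eq_one hM, hc0]
  · rintro ⟨c, hc, hcM⟩
    have hc0 : ∑ i, c i = 0 := by rw [← sum_vecMul_of_sum_row_eq_one hM, hcM]; simp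
    refine ⟨c, hc0, ?_, Function.ne_iff.mp hc⟩
    rw [Finset.univ.weightedVSub_eq_linear_combination hc0, hcomb, hcM]
    simp

end Barycentric

theorem dotProduct_eq_zero_and_dotProduct_eq_zero_iff_cross_eq_zero {K : Type*} [Field K]
    {n m w : Fin 3 → K} {c : K} (hnm : n ⨯₃ m = c • w) (hc : c ≠ 0) (hw : w ≠ 0)
    (x : Fin 3 → K) : x ⬝ᵥ n = 0 ∧ x ⬝ᵥ m = 0 ↔ x ⨯₃ w = 0 := by
  have hwn : w ⬝ᵥ n = 0 := by
    simpa [hnm, hc, dotProduct_comm] using dot_self_cross n m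
  have hwm : w ⬝ᵥ m = 0 := by
    simpa [hnm, hc, dotProduct_comm] using dot_cross_self n m
  constructor
  · rintro ⟨hn, hm⟩
    have h := cross_cross_eq_smul_sub_smul' x n m
    rw [hnm, map_smul, hm, dotProduct_comm, hn] at h
    simpa [hc] using h
  · intro hx
    have hn := cross_cross_eq_smul_sub_smul x w n
    have hm := cross_cross_eq_smul_sub_smul x w m
    rw [hx, hwn] at hn
    rw [hx, hwm] at hm
    simp only [map_zero, LinearMap.zero_apply, zero_smul, sub_zero] at hn hm
    exact ⟨(smul_eq_zero.mp hn.symm).resolve_right hw, (smul_eq_zero.mp hm.symm).resolve_right hw⟩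

/-- Rows: the barycentric coordinates of the cevian feet `D, E, F`. -/
def cevianMatrix (α β γ : ℝ) : Matrix (Fin 3) (Fin 3) ℝ :=
  !![0, β / (β + γ), γ / (β + γ); α / (γ + α), 0, γ / (γ + α); α / (α + β), β / (α + β), 0]

/-- Rows: the barycentric coordinates of `D₃, E₃, F₃`. -/
def isotomicCevianMatrix (α β γ : ℝ) : Matrix (Fin 3) (Fin 3) ℝ :=
  !![0, γ / (β + γ), β / (β + γ); γ / (γ + α), 0, α / (γ + α); β / (α + β), α / (α + β), 0]

def centroidBary : Fin 3 → ℝ := fun _ => 1 / 3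

def isotomicBary (α β γ : ℝ) : Fin 3 → ℝ :=
  (α * β + β * γ + γ * α)⁻¹ • ![β * γ, γ * α, α * β]

/-- `V = 2Q - P = A + B + C - P - P'`. -/
def vBary (α β γ : ℝ) : Fin 3 → ℝ := ![1 - α, 1 - β, 1 - γ] - isotomicBary α β γ

/-- `s • ((1, 1, 1) ⨯₃ vBary α β γ)` with `s = αβ + βγ + γα`, rewritten using `s - α = βγ - α²`
(valid as `α + β + γ = 1`). -/
def gvNormal (α β γ : ℝ) : Fin 3 → ℝ :=
  ![(β - γ) * (β * γ - α ^ 2), (γ - α) * (γ * α - β ^ 2), (α - β) * (α * β - γ ^ 2)]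

def fixedPointBary (α β γ : ℝ) : Fin 3 → ℝ :=
  ![(β + γ) * (γ - α) * (α - β), (γ + α) * (α - β) * (β - γ), (α + β) * (β - γ) * (γ - α)]

section CevianAlgebra

variable {α β γ : ℝ}

theorem AffineMap.apply_eq_sum_cevianMatrix_smul {V : Type*} [AddCommGroup V] [Module ℝ V]
    (f : V →ᵃ[ℝ] V) {A B C : V} (hA : f A = (β + γ)⁻¹ • (β • B + γ • C))
    (hB : f B = (γ + α)⁻¹ • (α • A + γ • C)) (hC : f C = (α + β)⁻¹ • (α • A + β • B))
    (i : Fin 3) : f (![A, B, C] i) = ∑ j, cevianMatrix α β γ i j • ![A, B, C] j := by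
  rw [Fin.sum_univ_three]
  fin_cases i <;> simp [cevianMatrix, hA, hB, hC] <;> module

theorem AffineMap.apply_eq_sum_isotomicCevianMatrix_smul {V : Type*} [AddCommGroup V]
    [Module ℝ V] (f : V →ᵃ[ℝ] V) {A B C : V} (hA : f A = (β + γ)⁻¹ • (γ • B + β • C))
    (hB : f B = (γ + α)⁻¹ • (γ • A + α • C)) (hC : f C = (α + β)⁻¹ • (β • A + α • B))
    (i : Fin 3) : f (![A, B, C] i) = ∑ j, isotomicCevianMatrix α β γ i j • ![A, B, C] j := by
  rw [Fin.sum_univ_three]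
  fin_cases i <;> simp [isotomicCevianMatrix, hA, hB, hC] <;> module

theorem sum_vBary_smul {V : Type*} [AddCommGroup V] [Module ℝ V] (A B C : V) :
    ∑ i, vBary α β γ i • ![A, B, C] i = (A + B + C) - (α • A + β • B + γ • C) -
      (α * β + β * γ + γ * α)⁻¹ • ((β * γ) • A + (γ * α) • B + (α * β) • C) := by
  rw [Fin.sum_univ_three]
  simp only [vBary, isotomicBary, Pi.sub_apply, Pi.smul_apply, smul_eq_mul, cons_val_zero,
    cons_val_one, cons_val]
  module

theorem sum_cevianMatrix_row (hβγ : β + γ ≠ 0) (hγα : γ + α ≠ 0) (hαβ : α + β ≠ 0) (i : Fin 3) :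
    ∑ j, cevianMatrix α β γ i j = 1 := by
  fin_cases i <;> simp [cevianMatrix, Fin.sum_univ_three, ← add_div, add_comm α γ, *]

theorem sum_isotomicCevianMatrix_row (hβγ : β + γ ≠ 0) (hγα : γ + α ≠ 0) (hαβ : α + β ≠ 0)
    (i : Fin 3) : ∑ j, isotomicCevianMatrix α β γ i j = 1 := by
  fin_cases i <;>
    simp [isotomicCevianMatrix, Fin.sum_univ_three, ← add_div, add_comm γ β, add_comm β α, *]

theorem sum_centroidBary : ∑ i, centroidBary i = 1 := by
  norm_num [centroidBary]

theorem sum_vBary (hsum : α + β + γ = 1) (hs : α * β + β * γ + γ * α ≠ 0) :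
    ∑ i, vBary α β γ i = 1 := by
  have hP' : ∑ i, isotomicBary α β γ i = 1 := by
    rw [← inv_mul_cancel₀ hs]
    simp only [isotomicBary, Fin.sum_univ_three, Pi.smul_apply, smul_eq_mul, cons_val_zero,
      cons_val_one, cons_val]
    ring
  simp only [vBary, Pi.sub_apply, Finset.sum_sub_distrib, hP', Fin.sum_univ_three, cons_val_zero,
    cons_val_one, cons_val]
  linarith

theorem centroidBary_cross_vBary (hsum : α + β + γ = 1) (hs : α * β + β * γ + γ * α ≠ 0) :
    centroidBary ⨯₃ vBary α β γ = (3 * (α * β + β * γ + γ * α))⁻¹ • gvNormal α β γ := by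
  rw [vBary, isotomicBary]
  generalize hsdef : α * β + β * γ + γ * α = s at *
  ext i; fin_cases i <;>
  · simp [cross_apply, centroidBary, gvNormal]
    field_simp
    obtain rfl : γ = 1 - α - β := by linarith
    rw [← hsdef]
    ring

theorem det_centroidBary_vBary_eq_zero_iff (hsum : α + β + γ = 1)
    (hs : α * β + β * γ + γ * α ≠ 0) (y : Fin 3 → ℝ) :
    det ![y, centroidBary, vBary α β γ] = 0 ↔ y ⬝ᵥ gvNormal α β γ = 0 := by
  rw [← triple_product_eq_det, centroidBary_cross_vBary hsum hs, dotProduct_smul]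
  simp [hs]

theorem gvNormal_cross_cevianMatrix_mulVec (hsum : α + β + γ = 1) (hβγ : β + γ ≠ 0)
    (hγα : γ + α ≠ 0) (hαβ : α + β ≠ 0) :
    gvNormal α β γ ⨯₃ (cevianMatrix α β γ *ᵥ gvNormal α β γ) =
      ((α - β) * (β - γ) * (γ - α) * (α * β + β * γ + γ * α) /
        ((α + β) * (β + γ) * (γ + α))) • fixedPointBary α β γ := by
  ext i; fin_cases i <;>
  · simp [cross_apply, cevianMatrix, gvNormal, fixedPointBary]
    field_simp
    obtain rfl : γ = 1 - α - β := by linarith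
    ring

theorem vecMul_isotomicCevianMatrix_eq_iff_cross_eq_zero (hβγ : β + γ ≠ 0) (hγα : γ + α ≠ 0)
    (hαβ : α + β ≠ 0) (hab : α ≠ β) (hbc : β ≠ γ) (hca : γ ≠ α) (x : Fin 3 → ℝ) :
    x ᵥ* isotomicCevianMatrix α β γ = x ᵥ* cevianMatrix α β γ ↔
      x ⨯₃ fixedPointBary α β γ = 0 := by
  set d : Fin 3 → ℝ :=
    ![(β - γ) * (γ + α) * (α + β), (γ - α) * (α + β) * (β + γ), (α - β) * (β + γ) * (γ + α)]
  have hd (j : Fin 3) : d j ≠ 0 := by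
    fin_cases j <;> simp [d, sub_eq_zero, *]
  have hrel : x ⨯₃ fixedPointBary α β γ =
      d * (x ᵥ* isotomicCevianMatrix α β γ - x ᵥ* cevianMatrix α β γ) := by
    ext j; fin_cases j <;>
    · simp [cross_apply, fixedPointBary, d, isotomicCevianMatrix, cevianMatrix, vecHead, vecTail]
      field_simp
      ring
  rw [hrel, ← sub_eq_zero (a := x ᵥ* _)]
  refine ⟨fun h => by rw [h, mul_zero], fun h => funext fun j => ?_⟩
  exact (mul_eq_zero.mp (congrFun h j)).resolve_left (hd j)

theorem vecMul_isotomicCevianMatrix_eq_iff_det (hsum : α + β + γ = 1) (hβγ : β + γ ≠ 0)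
    (hγα : γ + α ≠ 0) (hαβ : α + β ≠ 0) (hab : α ≠ β) (hbc : β ≠ γ) (hca : γ ≠ α)
    (hs : α * β + β * γ + γ * α ≠ 0) (x : Fin 3 → ℝ) :
    x ᵥ* isotomicCevianMatrix α β γ = x ᵥ* cevianMatrix α β γ ↔
      det ![x ᵥ* cevianMatrix α β γ, centroidBary, vBary α β γ] = 0 ∧
        det ![x, centroidBary, vBary α β γ] = 0 := by
  have hab' := sub_ne_zero.2 hab
  have hbc' := sub_ne_zero.2 hbc
  have hca' := sub_ne_zero.2 hca
  have hc : (α - β) * (β - γ) * (γ - α) * (α * β + β * γ + γ * α) /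
      ((α + β) * (β + γ) * (γ + α)) ≠ 0 := by positivity
  have hW : fixedPointBary α β γ ≠ 0 := fun h => by
    simpa [fixedPointBary, hβγ, hca', hab'] using congrFun h 0
  rw [vecMul_isotomicCevianMatrix_eq_iff_cross_eq_zero hβγ hγα hαβ hab hbc hca,
    det_centroidBary_vBary_eq_zero_iff hsum hs, det_centroidBary_vBary_eq_zero_iff hsum hs,
    ← dotProduct_mulVec, and_comm]
  exact (dotProduct_eq_zero_and_dotProduct_eq_zero_iff_cross_eq_zero
    (gvNormal_cross_cevianMatrix_mulVec hsum hβγ hγα hαβ) hc hW x).symm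

end CevianAlgebra

theorem stmt17_general
    (A B C : Pt) (hABC : AffineIndependent ℝ ![A, B, C])
    (α β γ : ℝ) (hsum : α + β + γ = 1)
    (hβγ : β + γ ≠ 0) (hγα : γ + α ≠ 0) (hαβ : α + β ≠ 0)
    (hab : α ≠ β) (hbc : β ≠ γ) (hca : γ ≠ α)
    (hs : α * β + β * γ + γ * α ≠ 0)
    (G : Pt) (hG : G = (3:ℝ)⁻¹ • (A + B + C))
    (P : Pt) (hP : P = α • A + β • B + γ • C)
    (P' : Pt)
    (hP'' : P' = (α * β + β * γ + γ * α)⁻¹ • ((β * γ) • A + (γ * α) • B + (α * β) • C))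
    (Q : Pt) (hQ : Q = G - (2:ℝ)⁻¹ • (P' - G))
    (D E F : Pt)
    (hD : D = (β + γ)⁻¹ • (β • B + γ • C))
    (hE : E = (γ + α)⁻¹ • (α • A + γ • C))
    (hF : F = (α + β)⁻¹ • (α • A + β • B))
    (D₃ E₃ F₃ : Pt)
    (hD₃ : D₃ = (β + γ)⁻¹ • (γ • B + β • C))
    (hE₃ : E₃ = (γ + α)⁻¹ • (γ • A + α • C))
    (hF₃ : F₃ = (α + β)⁻¹ • (β • A + α • B))
    (TP : Pt ≃ᵃ[ℝ] Pt) (hTPA : TP A = D) (hTPB : TP B = E) (hTPC : TP C = F)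
    (TP' : Pt ≃ᵃ[ℝ] Pt) (hTP'A : TP' A = D₃) (hTP'B : TP' B = E₃) (hTP'C : TP' C = F₃)
    (V : Pt) (hV : V = (2:ℝ) • Q - P)
    :
    ∀ R : Pt, TP' (TP.symm R) = R ↔
      (Collinear ℝ ({R, G, V} : Set Pt) ∧
       Collinear ℝ ({R, TP G, TP V} : Set Pt)) := by
  intro R
  have hG' : G = ∑ i, centroidBary i • ![A, B, C] i := by
    rw [hG]; simp [centroidBary, Fin.sum_univ_three]
  have hV' : V = ∑ i, vBary α β γ i • ![A, B, C] i := by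
    rw [sum_vBary_smul, hV, hQ, hP'', hP, hG]; module
  obtain ⟨x, hx, hX⟩ := hABC.exists_barycentric_eq finrank_euclideanSpace_fin (TP.symm R)
  have hR : R = ∑ j, (x ᵥ* cevianMatrix α β γ) j • ![A, B, C] j := by
    rw [← TP.apply_symm_apply R, hX]
    exact TP.toAffineMap.map_sum_smul_eq_sum_vecMul_smul
      (TP.toAffineMap.apply_eq_sum_cevianMatrix_smul (hTPA.trans hD) (hTPB.trans hE)
        (hTPC.trans hF)) hx
  have hR' : TP' (TP.symm R) = ∑ j, (x ᵥ* isotomicCevianMatrix α β γ) j • ![A, B, C] j := by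
    rw [hX]
    exact TP'.toAffineMap.map_sum_smul_eq_sum_vecMul_smul
      (TP'.toAffineMap.apply_eq_sum_isotomicCevianMatrix_smul (hTP'A.trans hD₃)
        (hTP'B.trans hE₃) (hTP'C.trans hF₃)) hx
  have hM := sum_vecMul_of_sum_row_eq_one (sum_cevianMatrix_row hβγ hγα hαβ) x
  have hM' := sum_vecMul_of_sum_row_eq_one (sum_isotomicCevianMatrix_row hβγ hγα hαβ) x
  have hcol : Collinear ℝ {R, TP G, TP V} ↔ Collinear ℝ {TP.symm R, G, V} := by
    simpa using TP.collinear_map_iff (a := TP.symm R) (b := G) (c := V)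
  rw [hcol, hR', hX, hR, hG', hV', hABC.sum_smul_eq_sum_smul_iff (hM'.trans hM.symm),
    hABC.collinear_iff_det_eq_zero (hM.trans hx) sum_centroidBary (sum_vBary hsum hs),
    hABC.collinear_iff_det_eq_zero hx sum_centroidBary (sum_vBary hsum hs)]
  exact vecMul_isotomicCevianMatrix_eq_iff_det hsum hβγ hγα hαβ hab hbc hca hs x

theorem stmt17
    (A B C : Pt) (hABC : AffineIndependent ℝ ![A, B, C])
    (α β γ : ℝ) (hsum : α + β + γ = 1)
    (hα : α ≠ 0) (hβ : β ≠ 0) (hγ : γ ≠ 0)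
    (hβγ : β + γ ≠ 0) (hγα : γ + α ≠ 0) (hαβ : α + β ≠ 0)
    (hab : α ≠ β) (hbc : β ≠ γ) (hca : γ ≠ α)
    (hs : α * β + β * γ + γ * α ≠ 0)
    (G : Pt) (hG : G = (3:ℝ)⁻¹ • (A + B + C))
    (P : Pt) (hP : P = α • A + β • B + γ • C)
    (P' : Pt)
    (hP'' : P' = (α * β + β * γ + γ * α)⁻¹ • ((β * γ) • A + (γ * α) • B + (α * β) • C))
    (Q : Pt) (hQ : Q = G - (2:ℝ)⁻¹ • (P' - G))
    (D E F : Pt)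
    (hD : D = (β + γ)⁻¹ • (β • B + γ • C))
    (hE : E = (γ + α)⁻¹ • (α • A + γ • C))
    (hF : F = (α + β)⁻¹ • (α • A + β • B))
    (D₃ E₃ F₃ : Pt)
    (hD₃ : D₃ = (β + γ)⁻¹ • (γ • B + β • C))
    (hE₃ : E₃ = (γ + α)⁻¹ • (γ • A + α • C))
    (hF₃ : F₃ = (α + β)⁻¹ • (β • A + α • B))
    (TP : Pt ≃ᵃ[ℝ] Pt) (hTPA : TP A = D) (hTPB : TP B = E) (hTPC : TP C = F)
    (TP' : Pt ≃ᵃ[ℝ] Pt) (hTP'A : TP' A = D₃) (hTP'B : TP' B = E₃) (hTP'C : TP' C = F₃)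
    (V : Pt) (hV : V = (2:ℝ) • Q - P)
    :
    ∀ R : Pt, TP' (TP.symm R) = R ↔
      (Collinear ℝ ({R, G, V} : Set Pt) ∧
       Collinear ℝ ({R, TP G, TP V} : Set Pt)) :=
  stmt17_general A B C hABC α β γ hsum hβγ hγα hαβ hab hbc hca hs G hG P hP P' hP'' Q hQ D E F hD hE
    hF D₃ E₃ F₃ hD₃ hE₃ hF₃ TP hTPA hTPB hTPC TP' hTP'A hTP'B hTP'C V hV
end
end

section
/- The midpoint J = (P+Q)/2 of segment PQ is collinear with T_P(G) and T_P(V), and the midpoint J' = (P'+Q')/2 of segment P'Q' is collinear with T_{P'}(G) and T_{P'}(V). (Thus T_P(GV) is the line G₁J through the centroid G₁ of the cevian triangle of P and the midpoint of PQ, and T_{P'}(GV) is the line G₂J'; together with the line GV these three lines are concurrent at the center Z of 𝒞_P.) -/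
/-!
Let `W` be the point a quarter of the way from `G` to `V` on the line `GV`. A barycentric
computation shows `T_P(W) = J`; since affine maps send lines to lines, `J` lies on the line
through `T_P(G)` and `T_P(V)`. The point `V = 2Q - P = 3G - P - P'` is symmetric in `P` and `P'`,
and isotomic conjugation is an involution (`Q'` is the isotomcomplement of `P'`, and the cevian
triangle of `P'` is `D₃E₃F₃`), so the second claim is the first one applied to `P'`.
-/

noncomputable section

theorem AffineMap.apply_smul_add_smul_add_smul {k E F : Type*} [CommRing k] [AddCommGroup E]
    [Module k E] [AddCommGroup F] [Module k F] (f : E →ᵃ[k] F) {u v w : k} (h : u + v + w = 1)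
    (a b c : E) : f (u • a + v • b + w • c) = u • f a + v • f b + w • f c := by
  rw [f.decomp]
  simp only [Pi.add_apply, map_add, map_smul]
  linear_combination (norm := module) -h • f 0

theorem AffineMap.collinear_apply_lineMap {k V P W Q : Type*} [Field k] [AddCommGroup V]
    [Module k V] [AddTorsor V P] [AddCommGroup W] [Module k W] [AddTorsor W Q] (f : P →ᵃ[k] Q)
    (x y : P) (t : k) : Collinear k {f (AffineMap.lineMap x y t), f x, f y} := by
  rw [f.apply_lineMap]
  exact collinear_insert_of_mem_affineSpan_pair (AffineMap.lineMap_mem_affineSpan_pair _ _ _)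

/-- Normalized barycentric coordinates of a point and of its isotomic conjugate. -/
structure IsIsotomic (α β γ α' β' γ' : ℝ) : Prop where
  sum_eq_one : α + β + γ = 1
  sum_eq_one' : α' + β' + γ' = 1
  mul_eq_mul₁ : α * α' = β * β'
  mul_eq_mul₂ : β * β' = γ * γ'

namespace IsIsotomic

variable {α β γ α' β' γ' : ℝ}

theorem of_div (hsum : α + β + γ = 1) (hs : α * β + β * γ + γ * α ≠ 0) :
    IsIsotomic α β γ (β * γ / (α * β + β * γ + γ * α)) (γ * α / (α * β + β * γ + γ * α))
      (α * β / (α * β + β * γ + γ * α)) :=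
  ⟨hsum, by rw [← add_div, ← add_div, div_eq_one_iff_eq hs]; ring, by ring, by ring⟩

theorem symm (h : IsIsotomic α β γ α' β' γ') : IsIsotomic α' β' γ' α β γ :=
  ⟨h.sum_eq_one', h.sum_eq_one, by linarith [h.mul_eq_mul₁], by linarith [h.mul_eq_mul₂]⟩

theorem rotate (h : IsIsotomic α β γ α' β' γ') : IsIsotomic β γ α β' γ' α' :=
  ⟨by linarith [h.sum_eq_one], by linarith [h.sum_eq_one'], h.mul_eq_mul₂,
    by linarith [h.mul_eq_mul₁, h.mul_eq_mul₂]⟩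

theorem mul_eq (h : IsIsotomic α β γ α' β' γ') :
    (α * β + β * γ + γ * α) * α' = β * γ ∧ (α * β + β * γ + γ * α) * β' = γ * α ∧
      (α * β + β * γ + γ * α) * γ' = α * β := by
  obtain ⟨-, h', h₁, h₂⟩ := h
  refine ⟨?_, ?_, ?_⟩
  · linear_combination β * (h₁ + h₂) + γ * h₁ + β * γ * h'
  · linear_combination α * h₂ - γ * h₁ + γ * α * h'
  · linear_combination -β * (h₁ + h₂) - α * h₂ + α * β * h'

theorem add_ne_zero (h : IsIsotomic α β γ α' β' γ') (hα : α ≠ 0) (hβγ : β + γ ≠ 0) :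
    β' + γ' ≠ 0 := by
  obtain ⟨-, hβ', hγ'⟩ := h.mul_eq
  intro h0
  have : α * (β + γ) = 0 := by linear_combination (α * β + β * γ + γ * α) * h0 - hβ' - hγ'
  exact mul_ne_zero hα hβγ this

theorem mul_add_mul_add_mul_ne_zero (h : IsIsotomic α β γ α' β' γ') (hα : α ≠ 0) (hβ : β ≠ 0)
    (hγ : γ ≠ 0) : α' * β' + β' * γ' + γ' * α' ≠ 0 := by
  obtain ⟨hα', hβ', hγ'⟩ := h.mul_eq
  intro h0
  -- `s² s' = αβγ (α + β + γ)` for `s = αβ + βγ + γα` and `s' = α'β' + β'γ' + γ'α'`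
  have : α * β * γ = 0 := by
    linear_combination (α * β + β * γ + γ * α) ^ 2 * h0 - α * β * γ * h.sum_eq_one
      - (α * β + β * γ + γ * α) * α' * hβ' - γ * α * hα'
      - (α * β + β * γ + γ * α) * β' * hγ' - α * β * hβ'
      - (α * β + β * γ + γ * α) * γ' * hα' - β * γ * hγ'
  exact mul_ne_zero (mul_ne_zero hα hβ) hγ this

end IsIsotomic

section

variable {E : Type*} [AddCommGroup E] [Module ℝ E]

theorem inv_smul_add_smul_eq_of_mul_eq_s18 {β γ β' γ' : ℝ} (h : β * β' = γ * γ') (hβγ : β + γ ≠ 0)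
    (hβγ' : β' + γ' ≠ 0) (B C : E) :
    (β' + γ')⁻¹ • (β' • B + γ' • C) = (β + γ)⁻¹ • (γ • B + β • C) := by
  match_scalars
  · field_simp
    linear_combination h
  · field_simp
    linear_combination -h

theorem midpoint_eq_apply_lineMap_of_isIsotomic (T : E →ᵃ[ℝ] E) {A B C G P P' : E}
    {α β γ α' β' γ' : ℝ} (h : IsIsotomic α β γ α' β' γ') (hs : α * β + β * γ + γ * α ≠ 0)
    (hβγ : β + γ ≠ 0) (hγα : γ + α ≠ 0) (hαβ : α + β ≠ 0)
    (hG : G = (3:ℝ)⁻¹ • (A + B + C)) (hP : P = α • A + β • B + γ • C)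
    (hP' : P' = α' • A + β' • B + γ' • C)
    (hTA : T A = (β + γ)⁻¹ • (β • B + γ • C)) (hTB : T B = (γ + α)⁻¹ • (α • A + γ • C))
    (hTC : T C = (α + β)⁻¹ • (α • A + β • B)) :
    midpoint ℝ P (G - (2:ℝ)⁻¹ • (P' - G)) =
      T (AffineMap.lineMap G ((3:ℝ) • G - P - P') (4⁻¹ : ℝ)) := by
  obtain ⟨hα', hβ', hγ'⟩ := h.mul_eq
  have hγ : γ = 1 - α - β := by linarith [h.sum_eq_one]
  generalize hs_def : α * β + β * γ + γ * α = s at hs hα' hβ' hγ'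
  obtain rfl : α' = β * γ / s := by rw [eq_div_iff hs, mul_comm, hα']
  obtain rfl : β' = γ * α / s := by rw [eq_div_iff hs, mul_comm, hβ']
  obtain rfl : γ' = α * β / s := by rw [eq_div_iff hs, mul_comm, hγ']
  have hW : AffineMap.lineMap G ((3:ℝ) • G - P - P') (4⁻¹ : ℝ) =
      (2⁻¹ - 4⁻¹ * (α + β * γ / s)) • A + (2⁻¹ - 4⁻¹ * (β + γ * α / s)) • B +
        (2⁻¹ - 4⁻¹ * (γ + α * β / s)) • C := by
    rw [AffineMap.lineMap_apply_module, hG, hP, hP']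
    module
  rw [hW, T.apply_smul_add_smul_add_smul, hTA, hTB, hTC, midpoint_eq_smul_add, invOf_eq_inv,
    hP, hP', hG]
  -- after clearing denominators these hold modulo `s = αβ + βγ + γα` and `α + β + γ = 1`
  · match_scalars <;> field_simp <;> subst hs_def hγ <;> ring
  · field_simp; subst hs_def hγ; ring

end

theorem stmt18_general
    (A B C : Pt)
    (α β γ : ℝ) (hsum : α + β + γ = 1)
    (hα : α ≠ 0) (hβ : β ≠ 0) (hγ : γ ≠ 0)
    (hβγ : β + γ ≠ 0) (hγα : γ + α ≠ 0) (hαβ : α + β ≠ 0)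
    (hs : α * β + β * γ + γ * α ≠ 0)
    (G : Pt) (hG : G = (3:ℝ)⁻¹ • (A + B + C))
    (P : Pt) (hP : P = α • A + β • B + γ • C)
    (P' : Pt)
    (hP'' : P' = (α * β + β * γ + γ * α)⁻¹ • ((β * γ) • A + (γ * α) • B + (α * β) • C))
    (Q : Pt) (hQ : Q = G - (2:ℝ)⁻¹ • (P' - G))
    (Q' : Pt) (hQ' : Q' = G - (2:ℝ)⁻¹ • (P - G))
    (D E F : Pt)
    (hD : D = (β + γ)⁻¹ • (β • B + γ • C))
    (hE : E = (γ + α)⁻¹ • (α • A + γ • C))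
    (hF : F = (α + β)⁻¹ • (α • A + β • B))
    (D₃ E₃ F₃ : Pt)
    (hD₃ : D₃ = (β + γ)⁻¹ • (γ • B + β • C))
    (hE₃ : E₃ = (γ + α)⁻¹ • (γ • A + α • C))
    (hF₃ : F₃ = (α + β)⁻¹ • (β • A + α • B))
    (TP : Pt →ᵃ[ℝ] Pt) (hTPA : TP A = D) (hTPB : TP B = E) (hTPC : TP C = F)
    (TP' : Pt →ᵃ[ℝ] Pt) (hTP'A : TP' A = D₃) (hTP'B : TP' B = E₃) (hTP'C : TP' C = F₃)
    (V : Pt) (hV : V = (2:ℝ) • Q - P)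
    :
    Collinear ℝ ({midpoint ℝ P Q, TP G, TP V} : Set Pt) ∧
    Collinear ℝ ({midpoint ℝ P' Q', TP' G, TP' V} : Set Pt) := by
  have hiso := IsIsotomic.of_div hsum hs
  have hP'bary : P' = (β * γ / (α * β + β * γ + γ * α)) • A + (γ * α / (α * β + β * γ + γ * α)) • B
      + (α * β / (α * β + β * γ + γ * α)) • C := by
    rw [hP'']; module
  have hVsymm : V = (3:ℝ) • G - P - P' := by rw [hV, hQ]; module
  have hJ := midpoint_eq_apply_lineMap_of_isIsotomic TP hiso hs hβγ hγα hαβ hG hP hP'bary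
    (hTPA.trans hD) (hTPB.trans hE) (hTPC.trans hF)
  have hβγ' := hiso.add_ne_zero hα hβγ
  have hγα' := hiso.rotate.add_ne_zero hβ hγα
  have hαβ' := hiso.rotate.rotate.add_ne_zero hγ hαβ
  have hJ' := midpoint_eq_apply_lineMap_of_isIsotomic TP' hiso.symm
    (hiso.mul_add_mul_add_mul_ne_zero hα hβ hγ) hβγ' hγα' hαβ' hG hP'bary hP
    (by rw [hTP'A, hD₃, inv_smul_add_smul_eq_of_mul_eq_s18 hiso.mul_eq_mul₂ hβγ hβγ'])
    (by rw [hTP'B, hE₃, add_comm γ, add_comm (α * β / _),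
      inv_smul_add_smul_eq_of_mul_eq_s18 hiso.rotate.mul_eq_mul₂.symm (by rwa [add_comm])
        (by rwa [add_comm])])
    (by rw [hTP'C, hF₃, inv_smul_add_smul_eq_of_mul_eq_s18 hiso.mul_eq_mul₁ hαβ hαβ'])
  rw [← hQ, ← hVsymm] at hJ
  rw [← hQ', sub_right_comm, ← hVsymm] at hJ'
  exact ⟨hJ ▸ TP.collinear_apply_lineMap G V 4⁻¹, hJ' ▸ TP'.collinear_apply_lineMap G V 4⁻¹⟩

theorem stmt18
    (A B C : Pt) (hABC : AffineIndependent ℝ ![A, B, C])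
    (α β γ : ℝ) (hsum : α + β + γ = 1)
    (hα : α ≠ 0) (hβ : β ≠ 0) (hγ : γ ≠ 0)
    (hβγ : β + γ ≠ 0) (hγα : γ + α ≠ 0) (hαβ : α + β ≠ 0)
    (hab : α ≠ β) (hbc : β ≠ γ) (hca : γ ≠ α)
    (hs : α * β + β * γ + γ * α ≠ 0)
    (G : Pt) (hG : G = (3:ℝ)⁻¹ • (A + B + C))
    (P : Pt) (hP : P = α • A + β • B + γ • C)
    (P' : Pt)
    (hP'' : P' = (α * β + β * γ + γ * α)⁻¹ • ((β * γ) • A + (γ * α) • B + (α * β) • C))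
    (Q : Pt) (hQ : Q = G - (2:ℝ)⁻¹ • (P' - G))
    (Q' : Pt) (hQ' : Q' = G - (2:ℝ)⁻¹ • (P - G))
    (D E F : Pt)
    (hD : D = (β + γ)⁻¹ • (β • B + γ • C))
    (hE : E = (γ + α)⁻¹ • (α • A + γ • C))
    (hF : F = (α + β)⁻¹ • (α • A + β • B))
    (D₃ E₃ F₃ : Pt)
    (hD₃ : D₃ = (β + γ)⁻¹ • (γ • B + β • C))
    (hE₃ : E₃ = (γ + α)⁻¹ • (γ • A + α • C))
    (hF₃ : F₃ = (α + β)⁻¹ • (β • A + α • B))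
    (TP : Pt →ᵃ[ℝ] Pt) (hTPA : TP A = D) (hTPB : TP B = E) (hTPC : TP C = F)
    (TP' : Pt →ᵃ[ℝ] Pt) (hTP'A : TP' A = D₃) (hTP'B : TP' B = E₃) (hTP'C : TP' C = F₃)
    (V : Pt) (hV : V = (2:ℝ) • Q - P)
    :
    Collinear ℝ ({midpoint ℝ P Q, TP G, TP V} : Set Pt) ∧
    Collinear ℝ ({midpoint ℝ P' Q', TP' G, TP' V} : Set Pt) :=
  stmt18_general A B C α β γ hsum hα hβ hγ hβγ hγα hαβ hs G hG P hP P' hP'' Q hQ Q' hQ' D E F hD hE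
    hF D₃ E₃ F₃ hD₃ hE₃ hF₃ TP hTPA hTPB hTPC TP' hTP'A hTP'B hTP'C V hV
end
end
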